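/- arXiv:1906.00907 — 4 statements merged into one kernel-verified Lean document; each statement's English description precedes it below -/
import Mathlib

section
/- Let z ∈ I_n be vexillary. Then the map (p,q) ↦ q − rank(z_{[p][q]}) is injective on the essential set Ess(D^O(z)); that is, if (p_1,q_1) and (p_2,q_2) are distinct elements of Ess(D^O(z)), then q_1 − rank(z_{[p_1][q_1]}) ≠ q_2 − rank(z_{[p_2][q_2]}). -/
open MvPolynomial

noncomputable section

/-- The coefficient ring `ℤ[β]`. -/
abbrev Rb : Type := Polynomial ℤ

/-- The indeterminate `β`. -/
def bb : Rb := Polynomial.X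

/-- The order-reversing permutation `n⋯321`, i.e. `i ↦ n+1-i` in 1-indexed notation. -/
def revPerm (n : ℕ) : Equiv.Perm (Fin n) :=
  ⟨Fin.rev, Fin.rev, fun i => Fin.rev_rev i, fun i => Fin.rev_rev i⟩

/-- `z` is a fixed-point-free involution. -/
def IsFPF {n : ℕ} (z : Equiv.Perm (Fin n)) : Prop :=
  z * z = 1 ∧ ∀ i, z i ≠ i

/-- `x_i + x_j + β x_i x_j`. -/
def oplus {n : ℕ} (i j : Fin n) : MvPolynomial (Fin n) Rb :=
  X i + X j + C bb * (X i * X j)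

/-- `IsDivDiffB i j f g` encodes `∂_i^{(β)} f = g` where `j = i+1`:
`∂_i^{(β)} f = ((1+βx_j) f - s_i((1+βx_j) f)) / (x_i - x_j)`, stated multiplicatively
(the quotient is exact, and `g` is uniquely determined since the ring is a domain). -/
def IsDivDiffB {n : ℕ} (i j : Fin n) (f g : MvPolynomial (Fin n) Rb) : Prop :=
  (X i - X j) * g =
    (1 + C bb * X j) * f - rename ⇑(Equiv.swap i j) ((1 + C bb * X j) * f)

/-- `∏_{1 ≤ i < j ≤ n-i} (x_i + x_j + β x_i x_j)` (variables 0-indexed). -/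
def spTop (n : ℕ) : MvPolynomial (Fin n) Rb :=
  ∏ p ∈ Finset.univ.filter
      (fun p : Fin n × Fin n => p.1 < p.2 ∧ (p.1 : ℕ) + (p.2 : ℕ) + 2 ≤ n),
    oplus p.1 p.2

/-- `x_1^{n-1} x_2^{n-2} ⋯ x_{n-1}^1` (variables 0-indexed). -/
def grTop (n : ℕ) : MvPolynomial (Fin n) Rb :=
  ∏ a : Fin n, X a ^ (n - 1 - (a : ℕ))

/-- The defining property of the family of symplectic Grothendieck polynomials. -/
def IsSpFam (n : ℕ) (G : Equiv.Perm (Fin n) → MvPolynomial (Fin n) Rb) : Prop :=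
  G (revPerm n) = spTop n ∧
    ∀ z : Equiv.Perm (Fin n), IsFPF z →
      ∀ i j : Fin n, (j : ℕ) = (i : ℕ) + 1 →
        z i ≠ j → z j ≠ i → z j < z i →
          IsDivDiffB i j (G z) (G (Equiv.swap i j * z * Equiv.swap i j))

/-- The defining property of the family of Grothendieck polynomials. -/
def IsGrothFam (n : ℕ) (G : Equiv.Perm (Fin n) → MvPolynomial (Fin n) Rb) : Prop :=
  G (revPerm n) = grTop n ∧
    ∀ (w : Equiv.Perm (Fin n)) (i j : Fin n), (j : ℕ) = (i : ℕ) + 1 →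
      w j < w i → IsDivDiffB i j (G w) (G (w * Equiv.swap i j))

/-- The length (number of inversions) of a permutation. -/
def invLen {n : ℕ} (w : Equiv.Perm (Fin n)) : ℕ :=
  (Finset.univ.filter (fun p : Fin n × Fin n => p.1 < p.2 ∧ w p.2 < w p.1)).card

/-- The fixed-point-free involution length `ℓ_fpf(z) = #{(i,j) : z(i) > z(j) < i < j}`. -/
def fpfLen {n : ℕ} (z : Equiv.Perm (Fin n)) : ℕ :=
  (Finset.univ.filter
      (fun p : Fin n × Fin n => z p.2 < z p.1 ∧ z p.2 < p.1 ∧ p.1 < p.2)).card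

/-- The underlying function of `Θ = (1,2)(3,4)⋯(n-1,n)`. -/
def thetaFun (n : ℕ) (hn : n % 2 = 0) (i : Fin n) : Fin n :=
  ⟨if (i : ℕ) % 2 = 0 then (i : ℕ) + 1 else (i : ℕ) - 1, by
    have hi := i.isLt
    split_ifs with h <;> omega⟩

/-- The fixed-point-free involution `Θ = (1,2)(3,4)⋯(n-1,n)`. -/
def theta (n : ℕ) (hn : n % 2 = 0) : Equiv.Perm (Fin n) :=
  Function.Involutive.toPerm (thetaFun n hn) (by
    intro i
    have hi := i.isLt
    apply Fin.ext
    simp only [thetaFun]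
    split_ifs <;> omega)

/-- One step of the partial Hecke action: `heckeStep a z = some (z · s_{a+1})` when defined,
with `a` a 0-indexed letter (so `a` corresponds to the simple transposition of `a+1, a+2`
in 1-indexed notation). -/
def heckeStep {n : ℕ} (a : ℕ) (z : Equiv.Perm (Fin n)) : Option (Equiv.Perm (Fin n)) :=
  if h : a + 1 < n then
    let i : Fin n := ⟨a, Nat.lt_of_succ_lt h⟩
    let j : Fin n := ⟨a + 1, h⟩
    if z i < z j then some (Equiv.swap i j * z * Equiv.swap i j)
    else if z i = j ∧ z j = i then none
    else if z i ≠ j ∧ z j ≠ i ∧ z j < z i then some z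
    else none
  else none

/-- Apply a word of (0-indexed) letters to `z` via the partial Hecke action. -/
def heckeApply {n : ℕ} (l : List ℕ) (z : Equiv.Perm (Fin n)) :
    Option (Equiv.Perm (Fin n)) :=
  l.foldl (fun o a => o.bind (heckeStep a)) (some z)

/-- The simple transposition corresponding to the 0-indexed letter `a`. -/
def swapAt (n : ℕ) (a : ℕ) : Equiv.Perm (Fin n) :=
  if h : a + 1 < n then Equiv.swap ⟨a, Nat.lt_of_succ_lt h⟩ ⟨a + 1, h⟩ else 1

/-- The permutation `s_{i_1} s_{i_2} ⋯ s_{i_l}` of a word. -/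
def wordToPerm (n : ℕ) (l : List ℕ) : Equiv.Perm (Fin n) := (l.map (swapAt n)).prod

/-- `l` is a reduced word for `w`. -/
def IsReducedWord (n : ℕ) (w : Equiv.Perm (Fin n)) (l : List ℕ) : Prop :=
  (∀ a ∈ l, a + 1 < n) ∧ wordToPerm n l = w ∧ l.length = invLen w

/-- The set of Hecke atoms `B_fpf(z)`. -/
def Bfpf (n : ℕ) (hn : n % 2 = 0) (z : Equiv.Perm (Fin n)) :
    Finset (Equiv.Perm (Fin n)) :=
  @Finset.filter _
    (fun w => ∃ l : List ℕ, IsReducedWord n w l ∧ heckeApply l (theta n hn) = some z)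
    (Classical.decPred _) Finset.univ

/-- `extPerm z w` is the permutation `z × w` acting on the first `m` letters by `z`
and the last `n` letters by `w`. -/
def extPerm {m n : ℕ} (z : Equiv.Perm (Fin m)) (w : Equiv.Perm (Fin n)) :
    Equiv.Perm (Fin (m + n)) :=
  finSumFinEquiv.symm.trans ((Equiv.sumCongr z w).trans finSumFinEquiv)

/-- `rank(z_{[i][j]}) = #{k ∈ [j] : z(k) ≤ i}` (1-indexed sizes `i, j`). -/
def permRank {n : ℕ} (z : Equiv.Perm (Fin n)) (i j : ℕ) : ℕ :=
  (Finset.univ.filter (fun k : Fin n => (k : ℕ) < j ∧ ((z k : Fin n) : ℕ) < i)).card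

/-- The rank of the upper-left `i × j` corner of `A` (1-indexed sizes `i, j ≤ n`). -/
def cornerRank {n : ℕ} (A : Matrix (Fin n) (Fin n) ℂ) (i j : ℕ) : ℕ :=
  Matrix.rank (Matrix.of fun (a : Fin (min i n)) (b : Fin (min j n)) =>
    A ⟨(a : ℕ), lt_of_lt_of_le a.isLt (min_le_right i n)⟩
      ⟨(b : ℕ), lt_of_lt_of_le b.isLt (min_le_right j n)⟩)

/-- The orthogonal Rothe diagram `D^O(z) = {(i, z(j)) : z(i) > z(j) ≤ i < j}` (0-indexed). -/
def DO (n : ℕ) (z : Equiv.Perm (Fin n)) : Finset (Fin n × Fin n) :=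
  Finset.image (fun p : Fin n × Fin n => (p.1, z p.2))
    (Finset.univ.filter (fun p : Fin n × Fin n => z p.2 < z p.1 ∧ z p.2 ≤ p.1 ∧ p.1 < p.2))

/-- The symplectic Rothe diagram `D^Sp(z) = {(i, z(j)) : z(i) > z(j) < i < j}` (0-indexed). -/
def DSp (n : ℕ) (z : Equiv.Perm (Fin n)) : Finset (Fin n × Fin n) :=
  Finset.image (fun p : Fin n × Fin n => (p.1, z p.2))
    (Finset.univ.filter (fun p : Fin n × Fin n => z p.2 < z p.1 ∧ z p.2 < p.1 ∧ p.1 < p.2))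

/-- The essential set `Ess(D) = {(i,j) ∈ D : (i,j+1) ∉ D and (i+1,j) ∉ D}`. -/
def Ess {n : ℕ} (D : Finset (Fin n × Fin n)) : Finset (Fin n × Fin n) :=
  D.filter (fun p =>
    (∀ q ∈ D, ¬(q.1 = p.1 ∧ (q.2 : ℕ) = (p.2 : ℕ) + 1)) ∧
    (∀ q ∈ D, ¬((q.1 : ℕ) = (p.1 : ℕ) + 1 ∧ q.2 = p.2)))

/-- A permutation is vexillary if it avoids the pattern 2143. -/
def Vexillary {n : ℕ} (z : Equiv.Perm (Fin n)) : Prop :=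
  ¬ ∃ i j k l : Fin n, i < j ∧ j < k ∧ k < l ∧ z j < z i ∧ z i < z l ∧ z l < z k

/-- The ideal of `ℤ[x_1,…,x_N]` generated by symmetric polynomials with zero constant term. -/
def ILambda (N : ℕ) : Ideal (MvPolynomial (Fin N) ℤ) :=
  Ideal.span {f : MvPolynomial (Fin N) ℤ |
    (∀ σ : Equiv.Perm (Fin N), rename (⇑σ) f = f) ∧ coeff 0 f = 0}

/-- Substitute `x_j = 0` for all `j > n`, producing a polynomial in `x_1,…,x_n`. -/
def truncVars (n N : ℕ) (f : MvPolynomial (Fin N) Rb) : MvPolynomial (Fin n) Rb :=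
  aeval (fun i : Fin N => if h : (i : ℕ) < n then X ⟨(i : ℕ), h⟩ else 0) f

/-- The order used to list the elements of a pipe-dream subset `S`:
rows weakly increasing, columns strictly decreasing within a row. -/
def rowOrder {n : ℕ} (p q : Fin n × Fin n) : Prop :=
  p.1 < q.1 ∨ (p.1 = q.1 ∧ q.2 < p.2)

/-- `δ(S)` is a symplectic Hecke word for `z` (with Hecke words computed from `Θ`);
here `L` is the listing of `S` in the order `rowOrder`, and `(a,b) ∈ S` (0-indexed)
contributes the 0-indexed letter `a + b`, i.e. the 1-indexed letter `(b+1)+(a+1)-1`. -/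
def DeltaHeckeWord (n : ℕ) (hn : n % 2 = 0) (z : Equiv.Perm (Fin n))
    (S : Finset (Fin n × Fin n)) : Prop :=
  ∃ L : List (Fin n × Fin n), L.toFinset = S ∧ L.Chain' rowOrder ∧
    heckeApply (L.map (fun p => (p.1 : ℕ) + (p.2 : ℕ))) (theta n hn) = some z


namespace St14Aux

variable {n : ℕ}

lemma memDO_iff (z : Equiv.Perm (Fin n)) (hzz : ∀ k, z (z k) = k) (x y : Fin n) :
    (x, y) ∈ DO n z ↔ y ≤ x ∧ y < z x ∧ x < z y := by
  constructor
  · intro h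
    simp only [DO, Finset.mem_image, Finset.mem_filter, Finset.mem_univ, true_and] at h
    obtain ⟨⟨p1, p2⟩, ⟨h1, h2, h3⟩, heq⟩ := h
    have e1 : p1 = x := congrArg Prod.fst heq
    have e2 : z p2 = y := congrArg Prod.snd heq
    subst e1; subst e2
    exact ⟨h2, h1, by rw [hzz]; exact h3⟩
  · rintro ⟨h1, h2, h3⟩
    simp only [DO, Finset.mem_image, Finset.mem_filter, Finset.mem_univ, true_and]
    exact ⟨(x, z y), ⟨by rw [hzz]; exact h2, by rw [hzz]; exact h1, h3⟩, by rw [hzz]⟩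

lemma mem_of_ess {D : Finset (Fin n × Fin n)} {p : Fin n × Fin n} (hp : p ∈ Ess D) : p ∈ D :=
  (Finset.mem_filter.mp hp).1

lemma ess_south {D : Finset (Fin n × Fin n)} {p : Fin n × Fin n} (hp : p ∈ Ess D)
    (h : (p.1 : ℕ) + 1 < n) : ((⟨(p.1 : ℕ) + 1, h⟩ : Fin n), p.2) ∉ D := by
  intro hmem
  exact (Finset.mem_filter.mp hp).2.2 _ hmem ⟨rfl, rfl⟩

lemma ess_east {D : Finset (Fin n × Fin n)} {p : Fin n × Fin n} (hp : p ∈ Ess D)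
    (h : (p.2 : ℕ) + 1 < n) : (p.1, (⟨(p.2 : ℕ) + 1, h⟩ : Fin n)) ∉ D := by
  intro hmem
  exact (Finset.mem_filter.mp hp).2.1 _ hmem ⟨rfl, rfl⟩

/-- South-essential key consequence: `z(a+1) ≤ b`. -/
lemma south_key (z : Equiv.Perm (Fin n)) (hzz : ∀ k, z (z k) = k) {p : Fin n × Fin n}
    (hp : p ∈ Ess (DO n z)) (h : (p.1 : ℕ) + 1 < n) :
    ((z ⟨(p.1 : ℕ) + 1, h⟩ : Fin n) : ℕ) ≤ (p.2 : ℕ) := by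
  have hD : (p.1, p.2) ∈ DO n z := by rw [Prod.mk.eta]; exact mem_of_ess hp
  rw [memDO_iff z hzz] at hD
  obtain ⟨hba, hbza, hazb⟩ := hD
  set A1 : Fin n := ⟨(p.1 : ℕ) + 1, h⟩ with hA1
  have hnot := ess_south hp h
  rw [memDO_iff z hzz] at hnot
  by_contra hc
  push_neg at hc
  have h1 : p.2 ≤ A1 := by
    rw [Fin.le_def]; exact le_trans hba (Nat.le_succ _)
  have h2 : p.2 < z A1 := by rw [Fin.lt_def]; exact hc
  have h3 : ¬ A1 < z p.2 := fun h3 => hnot ⟨h1, h2, h3⟩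
  rw [Fin.lt_def] at h3 hazb
  push_neg at h3
  have : (z p.2 : ℕ) = (p.1 : ℕ) + 1 := le_antisymm h3 hazb
  have hzp2 : z p.2 = A1 := Fin.ext this
  have : z A1 = p.2 := by rw [← hzp2, hzz]
  rw [this] at hc
  exact absurd le_rfl (not_le.mpr hc)

end St14Aux

namespace St14Aux

/-- East-essential key consequence: `z(b+1) ≤ a`. -/
lemma east_key (z : Equiv.Perm (Fin n)) (hzz : ∀ k, z (z k) = k) {p : Fin n × Fin n}
    (hp : p ∈ Ess (DO n z)) (hb : (p.2 : ℕ) + 1 < n) (ha : (p.1 : ℕ) + 1 < n) :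
    ((z ⟨(p.2 : ℕ) + 1, hb⟩ : Fin n) : ℕ) ≤ (p.1 : ℕ) := by
  have hD : (p.1, p.2) ∈ DO n z := by rw [Prod.mk.eta]; exact mem_of_ess hp
  rw [memDO_iff z hzz] at hD
  obtain ⟨hba, hbza, hazb⟩ := hD
  set B1 : Fin n := ⟨(p.2 : ℕ) + 1, hb⟩ with hB1
  have hB1v : (B1 : ℕ) = (p.2 : ℕ) + 1 := rfl
  have hnot := ess_east hp hb
  rw [memDO_iff z hzz] at hnot
  by_contra hc
  push_neg at hc
  by_cases h1 : (B1 : ℕ) ≤ (p.1 : ℕ)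
  · by_cases h2 : (B1 : ℕ) < ((z p.1 : Fin n) : ℕ)
    · exact hnot ⟨Fin.le_def.mpr h1, Fin.lt_def.mpr h2, Fin.lt_def.mpr hc⟩
    · push_neg at h2
      rw [Fin.lt_def] at hbza
      have : z p.1 = B1 := Fin.ext (le_antisymm h2 hbza)
      have hzB1 : z B1 = p.1 := by rw [← this, hzz]
      rw [hzB1] at hc
      exact absurd le_rfl (not_le.mpr hc)
  · push_neg at h1
    rw [Fin.le_def] at hba
    have heq : (p.2 : ℕ) = (p.1 : ℕ) := by omega
    have hA : B1 = (⟨(p.1 : ℕ) + 1, ha⟩ : Fin n) := Fin.ext (by rw [hB1v]; simp [heq])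
    have hsk := south_key z hzz hp ha
    rw [← hA] at hsk
    omega

lemma chain (z : Equiv.Perm (Fin n)) (hzz : ∀ k, z (z k) = k) (hvex : Vexillary z)
    {p q : Fin n × Fin n} (hp : p ∈ Ess (DO n z)) (hq : q ∈ DO n z)
    (h1 : (p.1 : ℕ) < (q.1 : ℕ)) (h2 : (p.2 : ℕ) < (q.2 : ℕ)) : False := by
  have ha : (p.1 : ℕ) + 1 < n := lt_of_le_of_lt (Nat.succ_le_of_lt h1) q.1.isLt
  have hb : (p.2 : ℕ) + 1 < n := lt_of_le_of_lt (Nat.succ_le_of_lt h2) q.2.isLt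
  set A1 : Fin n := ⟨(p.1 : ℕ) + 1, ha⟩ with hA1
  set B1 : Fin n := ⟨(p.2 : ℕ) + 1, hb⟩ with hB1
  have hA1v : (A1 : ℕ) = (p.1 : ℕ) + 1 := rfl
  have hB1v : (B1 : ℕ) = (p.2 : ℕ) + 1 := rfl
  have hC4 : ((z A1 : Fin n) : ℕ) ≤ (p.2 : ℕ) := south_key z hzz hp ha
  have hC1 : ((z B1 : Fin n) : ℕ) ≤ (p.1 : ℕ) := east_key z hzz hp hb ha
  have hqD : (q.1, q.2) ∈ DO n z := by rw [Prod.mk.eta]; exact hq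
  rw [memDO_iff z hzz] at hqD
  obtain ⟨hq1, hq2, hq3⟩ := hqD
  rw [Fin.lt_def] at hq2 hq3
  rw [Fin.le_def] at hq1
  have hC2 : (p.1 : ℕ) + 1 < (q.1 : ℕ) := by
    by_contra hcon
    push_neg at hcon
    have : q.1 = A1 := Fin.ext (by omega)
    rw [this] at hq2
    omega
  have hC5 : (p.2 : ℕ) + 1 < (q.2 : ℕ) := by
    by_contra hcon
    push_neg at hcon
    have : q.2 = B1 := Fin.ext (by omega)
    rw [this] at hq3
    omega
  refine hvex ⟨z B1, A1, q.1, z q.2, ?_, ?_, ?_, ?_, ?_, ?_⟩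
  · exact Fin.lt_def.mpr (by omega)
  · exact Fin.lt_def.mpr hC2
  · exact Fin.lt_def.mpr hq3
  · rw [hzz]; exact Fin.lt_def.mpr (by omega)
  · rw [hzz, hzz]; exact Fin.lt_def.mpr (by omega)
  · rw [hzz]; exact Fin.lt_def.mpr hq2

end St14Aux

namespace St14Aux

lemma rank_split (z : Equiv.Perm (Fin n)) (a b : Fin n) :
    permRank z ((a : ℕ) + 1) ((b : ℕ) + 1)
      + (Finset.univ.filter
          (fun k : Fin n => (k : ℕ) ≤ (b : ℕ) ∧ (a : ℕ) < ((z k : Fin n) : ℕ))).card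
      = (b : ℕ) + 1 := by
  have hbase : (Finset.univ.filter (fun k : Fin n => (k : ℕ) ≤ (b : ℕ))).card = (b : ℕ) + 1 := by
    rw [show Finset.univ.filter (fun k : Fin n => (k : ℕ) ≤ (b : ℕ)) = Finset.Iic b from by
      ext k
      simp only [Finset.mem_filter, Finset.mem_univ, true_and, Finset.mem_Iic, Fin.le_def]]
    exact Fin.card_Iic b
  have hsplit := Finset.card_filter_add_card_filter_not
      (s := Finset.univ.filter (fun k : Fin n => (k : ℕ) ≤ (b : ℕ)))
      (p := fun k : Fin n => ((z k : Fin n) : ℕ) < (a : ℕ) + 1)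
  rw [Finset.filter_filter, Finset.filter_filter, hbase] at hsplit
  have e1 : (Finset.univ.filter
      (fun k : Fin n => (k : ℕ) ≤ (b : ℕ) ∧ ((z k : Fin n) : ℕ) < (a : ℕ) + 1)).card
      = permRank z ((a : ℕ) + 1) ((b : ℕ) + 1) := by
    unfold permRank
    congr 1
    apply Finset.filter_congr
    intro k _
    omega
  have e2 : (Finset.univ.filter
      (fun k : Fin n => (k : ℕ) ≤ (b : ℕ) ∧ ¬((z k : Fin n) : ℕ) < (a : ℕ) + 1)).card
      = (Finset.univ.filter
      (fun k : Fin n => (k : ℕ) ≤ (b : ℕ) ∧ (a : ℕ) < ((z k : Fin n) : ℕ))).card := by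
    congr 1
    apply Finset.filter_congr
    intro k _
    omega
  omega

lemma Fstrict (z : Equiv.Perm (Fin n)) (hzz : ∀ k, z (z k) = k) {p : Fin n × Fin n}
    (hp : p ∈ Ess (DO n z)) (a2 b2 : Fin n)
    (h1 : (p.1 : ℕ) ≤ (a2 : ℕ)) (h2 : (b2 : ℕ) ≤ (p.2 : ℕ))
    (hne : (p.1 : ℕ) ≠ (a2 : ℕ) ∨ (p.2 : ℕ) ≠ (b2 : ℕ)) :
    (Finset.univ.filter
        (fun k : Fin n => (k : ℕ) ≤ (b2 : ℕ) ∧ (a2 : ℕ) < ((z k : Fin n) : ℕ))).card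
      < (Finset.univ.filter
        (fun k : Fin n => (k : ℕ) ≤ (p.2 : ℕ) ∧ (p.1 : ℕ) < ((z k : Fin n) : ℕ))).card := by
  have hD : (p.1, p.2) ∈ DO n z := by rw [Prod.mk.eta]; exact mem_of_ess hp
  rw [memDO_iff z hzz] at hD
  obtain ⟨hba, hbza, hazb⟩ := hD
  rw [Fin.le_def] at hba
  rw [Fin.lt_def] at hbza hazb
  apply Finset.card_lt_card
  have hsub : (Finset.univ.filter
        (fun k : Fin n => (k : ℕ) ≤ (b2 : ℕ) ∧ (a2 : ℕ) < ((z k : Fin n) : ℕ)))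
      ⊆ (Finset.univ.filter
        (fun k : Fin n => (k : ℕ) ≤ (p.2 : ℕ) ∧ (p.1 : ℕ) < ((z k : Fin n) : ℕ))) := by
    intro k hk
    simp only [Finset.mem_filter, Finset.mem_univ, true_and] at hk ⊢
    omega
  rw [Finset.ssubset_iff_of_subset hsub]
  by_cases hbb : (b2 : ℕ) < (p.2 : ℕ)
  · refine ⟨p.2, ?_, ?_⟩
    · simp only [Finset.mem_filter, Finset.mem_univ, true_and]
      exact ⟨le_rfl, hazb⟩
    · simp only [Finset.mem_filter, Finset.mem_univ, true_and]
      intro hcon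
      omega
  · have haa : (p.1 : ℕ) < (a2 : ℕ) := by omega
    have ha : (p.1 : ℕ) + 1 < n := lt_of_le_of_lt (Nat.succ_le_of_lt haa) a2.isLt
    have hsk : ((z ⟨(p.1 : ℕ) + 1, ha⟩ : Fin n) : ℕ) ≤ (p.2 : ℕ) := south_key z hzz hp ha
    have hzzv : ((z (z ⟨(p.1 : ℕ) + 1, ha⟩) : Fin n) : ℕ) = (p.1 : ℕ) + 1 := by rw [hzz]
    refine ⟨z ⟨(p.1 : ℕ) + 1, ha⟩, ?_, ?_⟩
    · simp only [Finset.mem_filter, Finset.mem_univ, true_and]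
      omega
    · simp only [Finset.mem_filter, Finset.mem_univ, true_and]
      intro hcon
      omega

end St14Aux

theorem statement14 (n : ℕ) (z : Equiv.Perm (Fin n)) (hz : z * z = 1)
    (hvex : Vexillary z)
    (p q : Fin n × Fin n) (hp : p ∈ Ess (DO n z)) (hq : q ∈ Ess (DO n z))
    (hpq : p ≠ q) :
    (p.2 : ℕ) + 1 - permRank z ((p.1 : ℕ) + 1) ((p.2 : ℕ) + 1) ≠
      (q.2 : ℕ) + 1 - permRank z ((q.1 : ℕ) + 1) ((q.2 : ℕ) + 1) := by

  have hzz : ∀ k, z (z k) = k := fun k => by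
    have := Equiv.ext_iff.mp hz k
    simpa using this
  intro heq
  have hsp := St14Aux.rank_split z p.1 p.2
  have hsq := St14Aux.rank_split z q.1 q.2
  have hcard : (Finset.univ.filter
      (fun k : Fin n => (k : ℕ) ≤ (p.2 : ℕ) ∧ (p.1 : ℕ) < ((z k : Fin n) : ℕ))).card
      = (Finset.univ.filter
      (fun k : Fin n => (k : ℕ) ≤ (q.2 : ℕ) ∧ (q.1 : ℕ) < ((z k : Fin n) : ℕ))).card := by
    omega
  rcases lt_trichotomy ((p.1 : ℕ)) ((q.1 : ℕ)) with h1 | h1 | h1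
  · rcases lt_or_ge ((p.2 : ℕ)) ((q.2 : ℕ)) with h2 | h2
    · exact St14Aux.chain z hzz hvex hp (St14Aux.mem_of_ess hq) h1 h2
    · have := St14Aux.Fstrict z hzz hp q.1 q.2 h1.le h2 (Or.inl h1.ne)
      omega
  · have hne2 : (p.2 : ℕ) ≠ (q.2 : ℕ) := by
      intro h2
      exact hpq (Prod.ext (Fin.ext h1) (Fin.ext h2))
    rcases lt_or_ge ((p.2 : ℕ)) ((q.2 : ℕ)) with h2 | h2
    · have := St14Aux.Fstrict z hzz hq p.1 p.2 h1.ge h2.le (Or.inr (Ne.symm hne2))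
      omega
    · have := St14Aux.Fstrict z hzz hp q.1 q.2 h1.le h2 (Or.inr hne2)
      omega
  · rcases lt_or_ge ((q.2 : ℕ)) ((p.2 : ℕ)) with h2 | h2
    · exact St14Aux.chain z hzz hvex hq (St14Aux.mem_of_ess hp) h1 h2
    · have := St14Aux.Fstrict z hzz hq p.1 p.2 h1.le h2 (Or.inl h1.ne)
      omega

end
end

section
/- Let n be a positive even integer, z ∈ I^FPF_n, and Θ = (1,2)(3,4)⋯(n−1,n) ∈ I^FPF_n. Then ℓ_fpf(z) = min{ℓ(w) : w ∈ S_n and w⁻¹ · Θ · w = z}. -/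
open MvPolynomial

noncomputable section

/-!
The inversions `(a, b)` of a fixed-point-free involution `z` split according to whether `z b` is
smaller than, larger than or equal to `a`. The first kind are counted by `fpfLen z`,
`(a, b) ↦ (z b, z a)` matches them with the second kind, and the third kind are the `n / 2` arcs
`(a, z a)`; so `invLen z = n / 2 + 2 * fpfLen z`, and subadditivity of `invLen` applied to
`z = w⁻¹ Θ w` gives `fpfLen z ≤ invLen w`. Conversely, if `fpfLen z > 0` then `z` has an adjacent
descent `z (i + 1) < z i` with `z i ≠ i + 1`, and conjugating by `s_i` lowers `fpfLen` by one;
since `Θ` is the only fixed-point-free involution with `fpfLen = 0`, induction yields `w` with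
`invLen w ≤ fpfLen z`.
-/

section

open Finset

variable {n : ℕ}

theorem IsFPF.apply_apply {z : Equiv.Perm (Fin n)} (hz : IsFPF z) (k : Fin n) : z (z k) = k :=
  congrArg (· k) hz.1

theorem IsFPF.apply_eq_comm {z : Equiv.Perm (Fin n)} (hz : IsFPF z) {a b : Fin n} :
    z a = b ↔ z b = a :=
  ⟨fun h => h ▸ hz.apply_apply a, fun h => h ▸ hz.apply_apply b⟩

theorem IsFPF.conj {z : Equiv.Perm (Fin n)} (hz : IsFPF z) (σ : Equiv.Perm (Fin n)) :
    IsFPF (σ⁻¹ * z * σ) := by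
  refine ⟨?_, fun k hk => hz.2 (σ k) ?_⟩
  · calc σ⁻¹ * z * σ * (σ⁻¹ * z * σ) = σ⁻¹ * (z * z) * σ := by group
      _ = 1 := by rw [hz.1]; group
  · rwa [Equiv.Perm.mul_apply, Equiv.Perm.mul_apply, Equiv.Perm.inv_eq_iff_eq] at hk

theorem invLen_inv (w : Equiv.Perm (Fin n)) : invLen w⁻¹ = invLen w := by
  refine card_bij' (fun p _ => (w⁻¹ p.2, w⁻¹ p.1)) (fun p _ => (w p.2, w p.1)) ?_ ?_ ?_ ?_ <;>
    simp +contextual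

theorem invLen_one : invLen (1 : Equiv.Perm (Fin n)) = 0 := by
  rw [invLen, card_eq_zero, filter_eq_empty_iff]
  exact fun p _ h => h.1.asymm h.2

theorem invLen_mul_le (u v : Equiv.Perm (Fin n)) : invLen (u * v) ≤ invLen u + invLen v := by
  unfold invLen
  set I := univ.filter fun p : Fin n × Fin n => p.1 < p.2 ∧ (u * v) p.2 < (u * v) p.1
  have hv : (I.filter fun p => v p.2 < v p.1).card ≤
      (univ.filter fun p : Fin n × Fin n => p.1 < p.2 ∧ v p.2 < v p.1).card :=
    card_le_card fun p hp => by simp only [I, mem_filter, mem_univ, true_and] at hp ⊢; tauto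
  have hu : (I.filter fun p => ¬ v p.2 < v p.1).card ≤
      (univ.filter fun p : Fin n × Fin n => p.1 < p.2 ∧ u p.2 < u p.1).card := by
    refine card_le_card_of_injOn (fun p => (v p.1, v p.2)) (fun p hp => ?_) ?_
    · simp only [I, mem_coe, mem_filter, mem_univ, true_and] at hp ⊢
      rw [Equiv.Perm.mul_apply, Equiv.Perm.mul_apply, not_lt] at hp
      exact ⟨lt_of_le_of_ne hp.2 (v.injective.ne hp.1.1.ne), hp.1.2⟩
    · intro p _ q _ h
      simp only [Prod.mk.injEq, EmbeddingLike.apply_eq_iff_eq] at h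
      exact Prod.ext h.1 h.2
  have := card_filter_add_card_filter_not (s := I) (fun p => v p.2 < v p.1)
  omega

theorem swap_lt_swap_of_lt {i j p q : Fin n} (hj : (j : ℕ) = i + 1) (hpq : p < q)
    (hne : ¬(p = i ∧ q = j)) : Equiv.swap i j p < Equiv.swap i j q := by
  rw [Fin.lt_def] at hpq ⊢
  rw [← Fin.val_inj, ← Fin.val_inj] at hne
  simp only [Equiv.swap_apply_def, ← Fin.val_inj]
  split_ifs <;> omega

theorem invLen_mul_swap_of_lt {i j : Fin n} (hj : (j : ℕ) = i + 1) {w : Equiv.Perm (Fin n)}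
    (h : w i < w j) : invLen (w * Equiv.swap i j) = invLen w + 1 := by
  have hij : i < j := by rw [Fin.lt_def]; omega
  have key : univ.filter (fun p : Fin n × Fin n =>
        p.1 < p.2 ∧ (w * Equiv.swap i j) p.2 < (w * Equiv.swap i j) p.1) =
      insert (i, j) ((univ.filter fun p : Fin n × Fin n => p.1 < p.2 ∧ w p.2 < w p.1).map
        ((Equiv.swap i j).prodCongr (Equiv.swap i j)).toEmbedding) := by
    ext ⟨p, q⟩
    simp only [mem_filter, mem_univ, true_and, mem_insert, mem_map_equiv]
    simp only [Equiv.prodCongr_symm, Equiv.symm_swap, Equiv.prodCongr_apply, Prod.map,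
      Prod.mk.injEq, Equiv.Perm.mul_apply]
    constructor
    · rintro ⟨hpq, hw⟩
      by_cases hp : p = i ∧ q = j
      · exact Or.inl hp
      · exact Or.inr ⟨swap_lt_swap_of_lt hj hpq hp, hw⟩
    · rintro (⟨rfl, rfl⟩ | ⟨hpq, hw⟩)
      · simpa using ⟨hij, h⟩
      · refine ⟨?_, hw⟩
        by_cases hp : Equiv.swap i j p = i ∧ Equiv.swap i j q = j
        · rw [hp.1, hp.2] at hw
          exact absurd h hw.asymm
        · simpa using swap_lt_swap_of_lt hj hpq hp
  have hnot : (i, j) ∉ (univ.filter fun p : Fin n × Fin n => p.1 < p.2 ∧ w p.2 < w p.1).map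
      ((Equiv.swap i j).prodCongr (Equiv.swap i j)).toEmbedding := by
    simp [hij.asymm]
  rw [invLen, key, card_insert_of_notMem hnot, card_map, invLen]

theorem invLen_swap_mul_of_lt {i j : Fin n} (hj : (j : ℕ) = i + 1) {w : Equiv.Perm (Fin n)}
    (h : w⁻¹ i < w⁻¹ j) : invLen (Equiv.swap i j * w) = invLen w + 1 := by
  rw [← invLen_inv, mul_inv_rev, Equiv.swap_inv, invLen_mul_swap_of_lt hj h, invLen_inv]

theorem invLen_swap {i j : Fin n} (hj : (j : ℕ) = i + 1) : invLen (Equiv.swap i j) = 1 := by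
  simpa [invLen_one] using invLen_mul_swap_of_lt (w := 1) hj (by rw [Fin.lt_def]; simp [hj])

theorem IsFPF.two_mul_card_filter_lt_apply {z : Equiv.Perm (Fin n)} (hz : IsFPF z) :
    2 * (univ.filter fun k : Fin n => k < z k).card = n := by
  have hsymm : (univ.filter fun k : Fin n => k < z k).card =
      (univ.filter fun k : Fin n => ¬ k < z k).card := by
    refine card_bij' (fun k _ => z k) (fun k _ => z k) (fun k hk => ?_) (fun k hk => ?_)
      (fun k _ => hz.apply_apply k) (fun k _ => hz.apply_apply k)
    · simp only [mem_filter, mem_univ, true_and, hz.apply_apply, not_lt] at hk ⊢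
      exact hk.le
    · simp only [mem_filter, mem_univ, true_and, hz.apply_apply, not_lt] at hk ⊢
      exact lt_of_le_of_ne hk (hz.2 k)
  have := card_filter_add_card_filter_not (s := (univ : Finset (Fin n))) (fun k => k < z k)
  rw [card_univ, Fintype.card_fin] at this
  omega

theorem IsFPF.invLen_eq {z : Equiv.Perm (Fin n)} (hz : IsFPF z) :
    invLen z = n / 2 + 2 * fpfLen z := by
  let inv (r : Fin n → Fin n → Prop) [DecidableRel r] :=
    univ.filter fun p : Fin n × Fin n => (p.1 < p.2 ∧ z p.2 < z p.1) ∧ r (z p.2) p.1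
  have hsplit : invLen z = (inv (· < ·)).card + (inv (· > ·)).card + (inv (· = ·)).card := by
    simp only [invLen, inv, card_filter, ← sum_add_distrib]
    refine sum_congr rfl fun p _ => ?_
    rcases lt_trichotomy (z p.2) p.1 with h | h | h
    · simp [h, h.ne, h.le]
    · simp [h]
    · simp [h, h.asymm, h.ne']
  have hlt : (inv (· < ·)).card = fpfLen z := by
    unfold fpfLen
    congr 1
    ext p
    simp only [inv, mem_filter, mem_univ, true_and]
    tauto
  have hgt : (inv (· > ·)).card = (inv (· < ·)).card := by
    refine card_bij' (fun p _ => (z p.2, z p.1)) (fun p _ => (z p.2, z p.1)) ?_ ?_ ?_ ?_ <;>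
      simp +contextual [inv, hz.apply_apply]
  have heq : (inv (· = ·)).card = (univ.filter fun k : Fin n => k < z k).card := by
    refine card_bij' (fun p _ => p.1) (fun k _ => (k, z k)) (fun p hp => ?_) (fun k hk => ?_)
      (fun p hp => ?_) (fun k _ => rfl)
    · simp only [inv, mem_filter, mem_univ, true_and] at hp ⊢
      rw [hz.apply_eq_comm.1 hp.2]
      exact hp.1.1
    · simp only [inv, mem_filter, mem_univ, true_and] at hk ⊢
      simp [hz.apply_apply, hk]
    · simp only [inv, mem_filter, mem_univ, true_and] at hp
      rw [hz.apply_eq_comm.1 hp.2]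
  have := hz.two_mul_card_filter_lt_apply
  omega

theorem theta_apply_val (hn : n % 2 = 0) (i : Fin n) :
    (theta n hn i : ℕ) = if (i : ℕ) % 2 = 0 then (i : ℕ) + 1 else (i : ℕ) - 1 := rfl

theorem isFPF_theta (hn : n % 2 = 0) : IsFPF (theta n hn) := by
  refine ⟨Equiv.ext fun k => Fin.ext ?_, fun k hk => ?_⟩
  · simp only [Equiv.Perm.mul_apply, Equiv.Perm.one_apply, theta_apply_val]
    split_ifs <;> omega
  · have := congrArg Fin.val hk
    rw [theta_apply_val] at this
    split_ifs at this <;> omega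

theorem fpfLen_theta (hn : n % 2 = 0) : fpfLen (theta n hn) = 0 := by
  rw [fpfLen, card_eq_zero, filter_eq_empty_iff]
  rintro ⟨p, q⟩ - ⟨-, hqp, hpq⟩
  rw [Fin.lt_def, theta_apply_val] at hqp
  rw [Fin.lt_def] at hpq
  split_ifs at hqp <;> omega

theorem IsFPF.apply_val_eq_succ_of_fpfLen_eq_zero {z : Equiv.Perm (Fin n)} (hz : IsFPF z)
    (h0 : fpfLen z = 0) {a : Fin n} (ha : a < z a) : (z a : ℕ) = a + 1 := by
  rw [fpfLen, card_eq_zero, filter_eq_empty_iff] at h0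
  -- a point `i` strictly inside the arc `(a, z a)` gives the pair `(a, i)` or `(i, z a)`
  by_contra hne
  rw [Fin.lt_def] at ha
  set i : Fin n := ⟨a + 1, by omega⟩
  have hai : a < i := by rw [Fin.lt_def]; simp [i]
  have hiz : i < z a := by rw [Fin.lt_def]; simp [i]; omega
  rcases lt_or_gt_of_ne (fun h => hiz.ne (hz.apply_eq_comm.1 h).symm : z i ≠ a) with h | h
  · exact h0 (mem_univ (a, i)) ⟨h.trans (Fin.lt_def.2 ha), h, hai⟩
  · exact h0 (mem_univ (i, z a)) ⟨by rwa [hz.apply_apply], by rwa [hz.apply_apply], hiz⟩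

theorem IsFPF.eq_theta_of_fpfLen_eq_zero {z : Equiv.Perm (Fin n)} (hz : IsFPF z)
    (hn : n % 2 = 0) (h0 : fpfLen z = 0) : z = theta n hn := by
  have hadj (a : Fin n) : (z a : ℕ) = a + 1 ∨ (a : ℕ) = z a + 1 := by
    rcases lt_or_gt_of_ne (hz.2 a) with h | h
    · right
      simpa [hz.apply_apply] using hz.apply_val_eq_succ_of_fpfLen_eq_zero h0 (a := z a)
        (by rwa [hz.apply_apply])
    · exact Or.inl (hz.apply_val_eq_succ_of_fpfLen_eq_zero h0 h)
  have hpair (a b : Fin n) (h : (z a : ℕ) = b) : (z b : ℕ) = a := by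
    rw [hz.apply_eq_comm.1 (Fin.ext h)]
  have hval (k : ℕ) (hk : k < n) :
      (z ⟨k, hk⟩ : ℕ) = if k % 2 = 0 then k + 1 else k - 1 := by
    induction k with
    | zero => simpa using hadj ⟨0, hk⟩
    | succ k ih =>
      have hprev := ih (by omega)
      have hnext := hadj ⟨k + 1, hk⟩
      have h1 := hpair ⟨k, by omega⟩ ⟨k + 1, hk⟩
      have h2 := hpair ⟨k + 1, hk⟩ ⟨k, by omega⟩
      simp only at hnext h1 h2
      split_ifs at hprev ⊢ <;> omega
  exact Equiv.ext fun i => Fin.ext ((hval i i.isLt).trans (theta_apply_val hn i).symm)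

theorem IsFPF.exists_descent_of_fpfLen_pos {z : Equiv.Perm (Fin n)} (hz : IsFPF z)
    (hpos : 0 < fpfLen z) : ∃ i j : Fin n, (j : ℕ) = i + 1 ∧ z j < z i ∧ z i ≠ j := by
  set S := univ.filter fun p : Fin n × Fin n => z p.2 < z p.1 ∧ z p.2 < p.1 ∧ p.1 < p.2
  obtain ⟨⟨a, b⟩, hab, hmin⟩ :=
    S.exists_min_image (fun p => (p.2 : ℕ) - p.1) (card_pos.1 hpos)
  simp only [S, mem_filter, mem_univ, true_and] at hab hmin
  obtain ⟨hzba, hzb, hlt⟩ := hab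
  -- otherwise `c = a + 1` would give a pair of smaller gap, `(a, c)` or `(c, b)`
  have hb : (b : ℕ) = a + 1 := by
    by_contra hne
    rw [Fin.lt_def] at hlt
    set c : Fin n := ⟨a + 1, by omega⟩
    have hac : a < c := by rw [Fin.lt_def]; simp [c]
    have hcb : c < b := by rw [Fin.lt_def]; simp [c]; omega
    rcases lt_or_gt_of_ne (z.injective.ne hcb.ne) with h | h
    · have := hmin (a, c) ⟨h.trans hzba, h.trans hzb, hac⟩
      simp [c] at this
      omega
    · have := hmin (c, b) ⟨h, hzb.trans hac, hcb⟩
      simp [c] at this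
      omega
  refine ⟨a, b, hb, hzba, fun h => ?_⟩
  rw [hz.apply_eq_comm.1 h] at hzb
  exact lt_irrefl a hzb

theorem IsFPF.fpfLen_conj_swap {z : Equiv.Perm (Fin n)} (hz : IsFPF z) {i j : Fin n}
    (hj : (j : ℕ) = i + 1) (hd : z j < z i) (hne : z i ≠ j) :
    fpfLen (Equiv.swap i j * z * Equiv.swap i j) + 1 = fpfLen z := by
  set s := Equiv.swap i j
  have hz' : IsFPF (s * z * s) := by simpa [s] using hz.conj s
  have hzi : s (z i) = z i := Equiv.swap_apply_of_ne_of_ne (hz.2 i) hne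
  have hzj : s (z j) = z j :=
    Equiv.swap_apply_of_ne_of_ne (fun h => hne (hz.apply_eq_comm.1 h)) (hz.2 j)
  have hright : invLen (z * s) + 1 = invLen z := by
    have := invLen_mul_swap_of_lt hj (w := z * s) (by simpa [s] using hd)
    rwa [mul_assoc, Equiv.swap_mul_self, mul_one, eq_comm] at this
  have hleft : invLen (z * s) = invLen (s * z * s) + 1 := by
    have hinv : (s * z * s)⁻¹ = s * z * s := by
      rw [inv_eq_iff_mul_eq_one]; exact hz'.1
    have := invLen_swap_mul_of_lt hj (w := s * z * s) (by simpa [hinv, s, hzi, hzj] using hd)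
    rwa [← mul_assoc, ← mul_assoc, Equiv.swap_mul_self, one_mul] at this
  have := hz.invLen_eq
  have := hz'.invLen_eq
  omega

theorem IsFPF.exists_conj_theta_invLen_le {z : Equiv.Perm (Fin n)} (hn : n % 2 = 0)
    (hz : IsFPF z) : ∃ w : Equiv.Perm (Fin n), w⁻¹ * theta n hn * w = z ∧ invLen w ≤ fpfLen z := by
  induction h : fpfLen z generalizing z with
  | zero => exact ⟨1, by simp [hz.eq_theta_of_fpfLen_eq_zero hn h], by simp [invLen_one]⟩
  | succ N ih =>
    obtain ⟨i, j, hj, hd, hne⟩ := hz.exists_descent_of_fpfLen_pos (by omega)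
    have hstep := hz.fpfLen_conj_swap hj hd hne
    obtain ⟨w, hw, hlen⟩ := ih (z := Equiv.swap i j * z * Equiv.swap i j)
      (by simpa using hz.conj (Equiv.swap i j)) (by omega)
    refine ⟨w * Equiv.swap i j, ?_, ?_⟩
    · calc (w * Equiv.swap i j)⁻¹ * theta n hn * (w * Equiv.swap i j)
          = Equiv.swap i j * (w⁻¹ * theta n hn * w) * Equiv.swap i j := by simp [mul_assoc]
        _ = z := by simp [hw, mul_assoc]
    · calc invLen (w * Equiv.swap i j) ≤ invLen w + invLen (Equiv.swap i j) := invLen_mul_le _ _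
        _ ≤ N + 1 := by rw [invLen_swap hj]; omega

theorem IsFPF.fpfLen_le_invLen_of_conj {z w : Equiv.Perm (Fin n)} (hn : n % 2 = 0)
    (hz : IsFPF z) (hw : w⁻¹ * theta n hn * w = z) : fpfLen z ≤ invLen w := by
  have hsub := invLen_mul_le (w⁻¹ * theta n hn) w
  rw [hw, hz.invLen_eq] at hsub
  have hsub' := invLen_mul_le w⁻¹ (theta n hn)
  rw [invLen_inv, (isFPF_theta hn).invLen_eq, fpfLen_theta] at hsub'
  omega

end

theorem statement15_general (n : ℕ) (hev : n % 2 = 0)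
    (z : Equiv.Perm (Fin n)) (hz : IsFPF z) :
    IsLeast {m : ℕ | ∃ w : Equiv.Perm (Fin n),
      w⁻¹ * theta n hev * w = z ∧ invLen w = m} (fpfLen z) := by
  obtain ⟨w, hw, hle⟩ := hz.exists_conj_theta_invLen_le hev
  refine ⟨⟨w, hw, le_antisymm hle (hz.fpfLen_le_invLen_of_conj hev hw)⟩, ?_⟩
  rintro m ⟨w, hw, rfl⟩
  exact hz.fpfLen_le_invLen_of_conj hev hw

theorem statement15 (n : ℕ) (hpos : 0 < n) (hev : n % 2 = 0)
    (z : Equiv.Perm (Fin n)) (hz : IsFPF z) :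
    IsLeast {m : ℕ | ∃ w : Equiv.Perm (Fin n),
      w⁻¹ * theta n hev * w = z ∧ invLen w = m} (fpfLen z) :=
  statement15_general n hev z hz
end
end

section
/- For every n ≥ 1 there exists a unique family of polynomials {𝔊_w}_{w ∈ S_n} in ℤ[β][x_1,…,x_n] such that 𝔊_{n⋯321} = x_1^{n−1} x_2^{n−2} ⋯ x_{n−1}^1, where n⋯321 denotes the order-reversing permutation i ↦ n+1−i, and such that ∂_i^{(β)} 𝔊_w = 𝔊_{w s_i} for every w ∈ S_n and every i ∈ [n−1] with w(i) > w(i+1). -/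
open MvPolynomial

noncomputable section

namespace Statement18Aux

/-! ### Abstract algebraic core lemmas -/

theorem braid_core {R : Type*} [CommRing R] {F : Type*} [FunLike F R R] [RingHomClass F R R]
    (s t : F) (A B C bet : R)
    (hsA : s A = B) (hsB : s B = A) (hsC : s C = C) (hsb : s bet = bet)
    (htA : t A = A) (htB : t B = C) (htC : t C = B) (htb : t bet = bet)
    (hss : ∀ y, s (s y) = y) (htt : ∀ y, t (t y) = y)
    (hbr : ∀ y, t (s (t y)) = s (t (s y)))
    (u g2 g1 gw h2 h1 q : R)
    (e1 : (A - B) * g2 = (1 + bet*B)*u - s ((1 + bet*B)*u))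
    (e2 : (B - C) * g1 = (1 + bet*C)*g2 - t ((1 + bet*C)*g2))
    (e3 : (A - B) * gw = (1 + bet*B)*g1 - s ((1 + bet*B)*g1))
    (e4 : (B - C) * h2 = (1 + bet*C)*u - t ((1 + bet*C)*u))
    (e5 : (A - B) * h1 = (1 + bet*B)*h2 - s ((1 + bet*B)*h2))
    (e6 : (B - C) * q = (1 + bet*C)*h1 - t ((1 + bet*C)*h1)) :
    ((A-B)*(B-C)*(A-C))^2 * gw = ((A-B)*(B-C)*(A-C))^2 * q := by
  simp only [map_mul, map_sub, map_add, map_one, hsA, hsB, hsC, hsb, htA, htB, htC, htb,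
    hss, htt, hbr] at e1 e2 e3 e4 e5 e6
  have e1s := congrArg s e1
  have e1t := congrArg t e1
  have e2s := congrArg s e2
  have e4s := congrArg s e4
  have e4t := congrArg t e4
  have e5t := congrArg t e5
  simp only [map_mul, map_sub, map_add, map_one, hsA, hsB, hsC, hsb, htA, htB, htC, htb,
    hss, htt, hbr] at e1s e1t e2s e4s e4t e5t
  have e1st := congrArg s e1t
  have e4st := congrArg t e4s
  simp only [map_mul, map_sub, map_add, map_one, hsA, hsB, hsC, hsb, htA, htB, htC, htb,
    hss, htt, hbr] at e1st e4st
  linear_combination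
    ((A-B)*(B-C)^2*(A-C)^2) * e3
    + ((A-B)*(B-C)*(A-C)^2*(1+bet*B)) * e2
    - ((A-B)*(B-C)^2*(A-C)*(1+bet*A)) * e2s
    + ((B-C)*(A-C)^2*(1+bet*B)*(1+bet*C)) * e1
    + ((B-C)^2*(A-C)*(1+bet*A)*(1+bet*C)) * e1s
    - ((A-B)*(B-C)*(A-C)*(1+bet*B)^2) * e1t
    + ((A-B)*(B-C)*(A-C)*(1+bet*A)^2) * e1st
    - ((A-B)^2*(B-C)*(A-C)^2) * e6
    - ((A-B)*(B-C)*(A-C)^2*(1+bet*C)) * e5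
    + ((A-B)^2*(B-C)*(A-C)*(1+bet*B)) * e5t
    - ((A-B)*(A-C)^2*(1+bet*B)*(1+bet*C)) * e4
    + ((A-B)*(B-C)*(A-C)*(1+bet*A)*(1+bet*C)) * e4s
    - ((A-B)^2*(A-C)*(1+bet*B)*(1+bet*C)) * e4t
    - ((A-B)*(B-C)*(A-C)*(1+bet*A)*(1+bet*B)) * e4st

theorem comm_core {R : Type*} [CommRing R] {F : Type*} [FunLike F R R] [RingHomClass F R R]
    (s t : F) (A B C D bet : R)
    (hsA : s A = B) (hsB : s B = A) (hsC : s C = C) (hsD : s D = D) (hsb : s bet = bet)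
    (htA : t A = A) (htB : t B = B) (htC : t C = D) (htD : t D = C) (htb : t bet = bet)
    (hst : ∀ y, t (s y) = s (t y))
    (f v u w q : R)
    (h1 : (A - B) * v = (1 + bet*B)*f - s ((1 + bet*B)*f))
    (h2 : (C - D) * w = (1 + bet*D)*v - t ((1 + bet*D)*v))
    (h3 : (C - D) * u = (1 + bet*D)*f - t ((1 + bet*D)*f))
    (h4 : (A - B) * q = (1 + bet*B)*u - s ((1 + bet*B)*u)) :
    ((A-B)*(C-D)) * w = ((A-B)*(C-D)) * q := by
  simp only [map_mul, map_sub, map_add, map_one, hsA, hsB, hsC, hsD, hsb,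
    htA, htB, htC, htD, htb, hst] at h1 h2 h3 h4
  have h1t := congrArg t h1
  have h3s := congrArg s h3
  simp only [map_mul, map_sub, map_add, map_one, hsA, hsB, hsC, hsD, hsb,
    htA, htB, htC, htD, htb, hst] at h1t h3s
  linear_combination (A-B)*h2 + (1+bet*D)*h1 - (1+bet*C)*h1t
    - (C-D)*h4 - (1+bet*B)*h3 + (1+bet*A)*h3s

/-! ### Permutation group facts -/

theorem swap_braid_perm {α : Type*} [DecidableEq α] {a b c : α}
    (hab : a ≠ b) (hbc : b ≠ c) (hac : a ≠ c) :
    Equiv.swap b c * Equiv.swap a b * Equiv.swap b c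
      = Equiv.swap a b * Equiv.swap b c * Equiv.swap a b := by
  have h1 := Equiv.swap_mul_swap_mul_swap hab hac
  have h2 := Equiv.swap_mul_swap_mul_swap hbc.symm hac.symm
  rw [Equiv.swap_comm b a, Equiv.swap_comm c b] at h2
  rw [h1, h2, Equiv.swap_comm]

theorem swap_comm_disjoint {α : Type*} [DecidableEq α] {i j k l : α}
    (hki : k ≠ i) (hkj : k ≠ j) (hli : l ≠ i) (hlj : l ≠ j) :
    Equiv.swap k l * Equiv.swap i j = Equiv.swap i j * Equiv.swap k l := by
  have h := Equiv.swap_apply_apply (Equiv.swap i j) k l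
  rw [Equiv.swap_apply_of_ne_of_ne hki hkj, Equiv.swap_apply_of_ne_of_ne hli hlj] at h
  conv_lhs => rw [h]
  rw [inv_mul_cancel_right]

/-! ### Divided difference operator on `MvPolynomial` -/

open MvPolynomial

variable {n : ℕ}

theorem X_sub_X_ne_zero {i j : Fin n} (h : i ≠ j) :
    (X i - X j : MvPolynomial (Fin n) Rb) ≠ 0 :=
  sub_ne_zero.2 fun e => h (MvPolynomial.X_injective e)

theorem dvd_sub_rename (i j : Fin n) (f : MvPolynomial (Fin n) Rb) :
    (X i - X j : MvPolynomial (Fin n) Rb) ∣ f - rename ⇑(Equiv.swap i j) f := by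
  induction f using MvPolynomial.induction_on with
  | C a => simp
  | add p q hp hq =>
    have h : (p + q) - rename ⇑(Equiv.swap i j) (p + q)
        = (p - rename ⇑(Equiv.swap i j) p) + (q - rename ⇑(Equiv.swap i j) q) := by
      rw [map_add]; ring
    rw [h]; exact dvd_add hp hq
  | mul_X p a hp =>
    rw [map_mul, rename_X]
    have h : p * X a - rename ⇑(Equiv.swap i j) p * X (Equiv.swap i j a)
        = (p - rename ⇑(Equiv.swap i j) p) * X a
          + rename ⇑(Equiv.swap i j) p * (X a - X (Equiv.swap i j a)) := by ring
    rw [h]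
    refine dvd_add (Dvd.dvd.mul_right hp _) (Dvd.dvd.mul_left ?_ _)
    rcases eq_or_ne a i with rfl | hai
    · rw [Equiv.swap_apply_left]
    rcases eq_or_ne a j with rfl | haj
    · rw [Equiv.swap_apply_right]
      exact ⟨-1, by ring⟩
    · rw [Equiv.swap_apply_of_ne_of_ne hai haj, sub_self]
      exact dvd_zero _

noncomputable def DP (i j : Fin n) (f : MvPolynomial (Fin n) Rb) : MvPolynomial (Fin n) Rb :=
  (dvd_sub_rename i j ((1 + C bb * X j) * f)).choose

theorem DP_spec (i j : Fin n) (f : MvPolynomial (Fin n) Rb) :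
    IsDivDiffB i j f (DP i j f) :=
  ((dvd_sub_rename i j ((1 + C bb * X j) * f)).choose_spec).symm

theorem divdiff_unique {i j : Fin n} (h : i ≠ j) {f g g' : MvPolynomial (Fin n) Rb}
    (h1 : IsDivDiffB i j f g) (h2 : IsDivDiffB i j f g') : g = g' :=
  mul_left_cancel₀ (X_sub_X_ne_zero h) ((h1 : _ = _).trans (h2 : _ = _).symm)

theorem rename_perm_mul (σ τ : Equiv.Perm (Fin n)) (f : MvPolynomial (Fin n) Rb) :
    rename ⇑σ (rename ⇑τ f) = rename ⇑(σ * τ) f := by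
  rw [rename_rename, Equiv.Perm.coe_mul]

theorem rename_perm_one (f : MvPolynomial (Fin n) Rb) :
    rename ⇑(1 : Equiv.Perm (Fin n)) f = f := by
  rw [Equiv.Perm.coe_one, rename_id, AlgHom.id_apply]

/-- Braid relation for `IsDivDiffB`. -/
theorem braid_P {a b c : Fin n} (hab : a ≠ b) (hbc : b ≠ c) (hac : a ≠ c)
    {u g2 g1 gw h2 h1 q : MvPolynomial (Fin n) Rb}
    (e1 : IsDivDiffB a b u g2) (e2 : IsDivDiffB b c g2 g1) (e3 : IsDivDiffB a b g1 gw)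
    (e4 : IsDivDiffB b c u h2) (e5 : IsDivDiffB a b h2 h1) (e6 : IsDivDiffB b c h1 q) :
    gw = q := by
  have hΔ : (((X a - X b) * (X b - X c) * (X a - X c) : MvPolynomial (Fin n) Rb))^2 ≠ 0 :=
    pow_ne_zero 2 (mul_ne_zero (mul_ne_zero (X_sub_X_ne_zero hab) (X_sub_X_ne_zero hbc))
      (X_sub_X_ne_zero hac))
  refine mul_left_cancel₀ hΔ ?_
  refine braid_core (rename (R := Rb) ⇑(Equiv.swap a b)) (rename (R := Rb) ⇑(Equiv.swap b c))
    (X a) (X b) (X c) (C bb) ?_ ?_ ?_ ?_ ?_ ?_ ?_ ?_ ?_ ?_ ?_ u g2 g1 gw h2 h1 q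
    e1 e2 e3 e4 e5 e6
  · rw [rename_X, Equiv.swap_apply_left]
  · rw [rename_X, Equiv.swap_apply_right]
  · rw [rename_X, Equiv.swap_apply_of_ne_of_ne hac.symm hbc.symm]
  · rw [rename_C]
  · rw [rename_X, Equiv.swap_apply_of_ne_of_ne hab hac]
  · rw [rename_X, Equiv.swap_apply_left]
  · rw [rename_X, Equiv.swap_apply_right]
  · rw [rename_C]
  · intro y
    rw [rename_perm_mul, Equiv.swap_mul_self]
    exact rename_perm_one y
  · intro y
    rw [rename_perm_mul, Equiv.swap_mul_self]
    exact rename_perm_one y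
  · intro y
    rw [rename_perm_mul, rename_perm_mul, rename_perm_mul, rename_perm_mul,
      swap_braid_perm hab hbc hac]

/-- Commutation relation for `IsDivDiffB` (disjoint pairs). -/
theorem comm_P {i j k l : Fin n} (hij : i ≠ j) (hkl : k ≠ l)
    (hki : k ≠ i) (hkj : k ≠ j) (hli : l ≠ i) (hlj : l ≠ j)
    {f v u w q : MvPolynomial (Fin n) Rb}
    (h1 : IsDivDiffB i j f v) (h2 : IsDivDiffB k l v w)
    (h3 : IsDivDiffB k l f u) (h4 : IsDivDiffB i j u q) :
    w = q := by
  have hΔ : (((X i - X j) * (X k - X l) : MvPolynomial (Fin n) Rb)) ≠ 0 :=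
    mul_ne_zero (X_sub_X_ne_zero hij) (X_sub_X_ne_zero hkl)
  refine mul_left_cancel₀ hΔ ?_
  refine comm_core (rename (R := Rb) ⇑(Equiv.swap i j)) (rename (R := Rb) ⇑(Equiv.swap k l))
    (X i) (X j) (X k) (X l) (C bb) ?_ ?_ ?_ ?_ ?_ ?_ ?_ ?_ ?_ ?_ ?_ f v u w q h1 h2 h3 h4
  · rw [rename_X, Equiv.swap_apply_left]
  · rw [rename_X, Equiv.swap_apply_right]
  · rw [rename_X, Equiv.swap_apply_of_ne_of_ne hki hkj]
  · rw [rename_X, Equiv.swap_apply_of_ne_of_ne hli hlj]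
  · rw [rename_C]
  · rw [rename_X, Equiv.swap_apply_of_ne_of_ne hki.symm hli.symm]
  · rw [rename_X, Equiv.swap_apply_of_ne_of_ne hkj.symm hlj.symm]
  · rw [rename_X, Equiv.swap_apply_left]
  · rw [rename_X, Equiv.swap_apply_right]
  · rw [rename_C]
  · intro y
    rw [rename_perm_mul, rename_perm_mul, swap_comm_disjoint hki hkj hli hlj]

/-! ### Inversions and ascents -/

theorem invLen_le_sq (w : Equiv.Perm (Fin n)) : invLen w ≤ n * n := by
  calc invLen w ≤ (Finset.univ : Finset (Fin n × Fin n)).card :=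
        Finset.card_filter_le _ _
    _ = n * n := by simp

theorem swap_sorted {i j p q : Fin n} (hj : (j:ℕ) = (i:ℕ) + 1) (hpq : p < q)
    (hne : ¬(p = i ∧ q = j)) : Equiv.swap i j p < Equiv.swap i j q := by
  have hij : i < j := by rw [Fin.lt_def]; omega
  rcases eq_or_ne p i with rfl | hpi
  · have hqj : q ≠ j := fun h => hne ⟨rfl, h⟩
    have hqi : q ≠ p := (ne_of_gt hpq)
    rw [Equiv.swap_apply_left, Equiv.swap_apply_of_ne_of_ne hqi hqj]
    have h1 : (q:ℕ) ≠ (j:ℕ) := fun h => hqj (Fin.ext h)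
    rw [Fin.lt_def] at hpq ⊢; omega
  rcases eq_or_ne p j with rfl | hpj
  · have hqi : q ≠ i := by
      intro h; subst h; exact absurd (hij.trans hpq) (lt_irrefl _)
    have hqj : q ≠ p := ne_of_gt hpq
    rw [Equiv.swap_apply_right, Equiv.swap_apply_of_ne_of_ne hqi hqj]
    rw [Fin.lt_def] at hpq ⊢; omega
  rcases eq_or_ne q i with rfl | hqi
  · rw [Equiv.swap_apply_of_ne_of_ne hpi hpj, Equiv.swap_apply_left]
    rw [Fin.lt_def] at hpq ⊢; omega
  rcases eq_or_ne q j with rfl | hqj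
  · rw [Equiv.swap_apply_of_ne_of_ne hpi hpj, Equiv.swap_apply_right]
    have h1 : (p:ℕ) ≠ (i:ℕ) := fun h => hpi (Fin.ext h)
    rw [Fin.lt_def] at hpq ⊢; omega
  · rw [Equiv.swap_apply_of_ne_of_ne hpi hpj, Equiv.swap_apply_of_ne_of_ne hqi hqj]
    exact hpq

theorem invLen_lt_of_ascent {w : Equiv.Perm (Fin n)} {i j : Fin n}
    (hj : (j:ℕ) = (i:ℕ) + 1) (h : w i < w j) :
    invLen w < invLen (w * Equiv.swap i j) := by
  classical
  have hij : i < j := by rw [Fin.lt_def]; omega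
  set T := Finset.univ.filter (fun p : Fin n × Fin n => p.1 < p.2 ∧ w p.2 < w p.1) with hT
  have hmem : (i, j) ∉ T := by
    simp only [hT, Finset.mem_filter, Finset.mem_univ, true_and, not_and]
    intro _
    exact not_lt.2 h.le
  have hcard : (insert (i, j) T).card = invLen w + 1 := by
    rw [Finset.card_insert_of_notMem hmem]
    rfl
  have hle : (insert (i, j) T).card ≤ invLen (w * Equiv.swap i j) := by
    apply Finset.card_le_card_of_injOn
      (fun p => if p = (i, j) then p else (Equiv.swap i j p.1, Equiv.swap i j p.2))
    · intro p hp
      rcases Finset.mem_insert.1 hp with rfl | hp'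
      · beta_reduce
        rw [if_pos rfl]
        refine Finset.mem_filter.2 ⟨Finset.mem_univ _, hij, ?_⟩
        show (w * Equiv.swap i j) j < (w * Equiv.swap i j) i
        rw [Equiv.Perm.mul_apply, Equiv.Perm.mul_apply, Equiv.swap_apply_right,
          Equiv.swap_apply_left]
        exact h
      · have hps := Finset.mem_filter.1 hp'
        have hpne : p ≠ (i, j) := by rintro rfl; exact hmem hp'
        beta_reduce
        rw [if_neg hpne]
        refine Finset.mem_filter.2 ⟨Finset.mem_univ _, ?_, ?_⟩
        · exact swap_sorted hj hps.2.1
            (by rintro ⟨ha, hb⟩; exact hpne (Prod.ext ha hb))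
        · show (w * Equiv.swap i j) (Equiv.swap i j p.2)
              < (w * Equiv.swap i j) (Equiv.swap i j p.1)
          rw [Equiv.Perm.mul_apply, Equiv.Perm.mul_apply, Equiv.swap_apply_self,
            Equiv.swap_apply_self]
          exact hps.2.2
    · intro p hp q hq hfq
      simp only [] at hfq
      simp only [Finset.coe_insert, Set.mem_insert_iff, Finset.mem_coe] at hp hq
      by_cases h1 : p = (i, j) <;> by_cases h2 : q = (i, j)
      · rw [h1, h2]
      · exfalso
        rw [if_pos h1, if_neg h2, h1] at hfq
        have e1 : i = Equiv.swap i j q.1 := congrArg Prod.fst hfq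
        have e2 : j = Equiv.swap i j q.2 := congrArg Prod.snd hfq
        have hq1 : q.1 = j := (Equiv.swap i j).injective
          (by rw [Equiv.swap_apply_right]; exact e1.symm)
        have hq2 : q.2 = i := (Equiv.swap i j).injective
          (by rw [Equiv.swap_apply_left]; exact e2.symm)
        have hqT : q ∈ T := hq.resolve_left h2
        have hqlt := (Finset.mem_filter.1 hqT).2.1
        rw [hq1, hq2] at hqlt
        exact absurd (hij.trans hqlt) (lt_irrefl _)
      · exfalso
        rw [if_neg h1, if_pos h2, h2] at hfq
        have e1 : Equiv.swap i j p.1 = i := congrArg Prod.fst hfq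
        have e2 : Equiv.swap i j p.2 = j := congrArg Prod.snd hfq
        have hp1 : p.1 = j := (Equiv.swap i j).injective
          (by rw [Equiv.swap_apply_right]; exact e1)
        have hp2 : p.2 = i := (Equiv.swap i j).injective
          (by rw [Equiv.swap_apply_left]; exact e2)
        have hpT : p ∈ T := hp.resolve_left h1
        have hplt := (Finset.mem_filter.1 hpT).2.1
        rw [hp1, hp2] at hplt
        exact absurd (hij.trans hplt) (lt_irrefl _)
      · rw [if_neg h1, if_neg h2] at hfq
        have hfst := (Equiv.swap i j).injective (congrArg Prod.fst hfq)
        have hsnd := (Equiv.swap i j).injective (congrArg Prod.snd hfq)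
        exact Prod.ext hfst hsnd
  omega

theorem rev_no_ascent {i j : Fin n} (hj : (j:ℕ) = (i:ℕ) + 1) :
    ¬ revPerm n i < revPerm n j := by
  intro hlt
  have h1 : revPerm n i = Fin.rev i := rfl
  have h2 : revPerm n j = Fin.rev j := rfl
  rw [h1, h2, Fin.lt_def, Fin.val_rev, Fin.val_rev] at hlt
  have := j.isLt
  omega

theorem exists_ascent {w : Equiv.Perm (Fin n)} (hw : w ≠ revPerm n) :
    ∃ p : Fin n × Fin n, (p.2:ℕ) = (p.1:ℕ) + 1 ∧ w p.1 < w p.2 := by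
  by_contra hc
  push_neg at hc
  apply hw
  have hdesc : ∀ (a : ℕ) (h : a + 1 < n),
      (w ⟨a + 1, h⟩ : ℕ) < (w ⟨a, Nat.lt_of_succ_lt h⟩ : ℕ) := by
    intro a h
    have h1 := hc (⟨a, Nat.lt_of_succ_lt h⟩, ⟨a + 1, h⟩) rfl
    simp only [] at h1
    have h2 : w ⟨a + 1, h⟩ ≠ w ⟨a, Nat.lt_of_succ_lt h⟩ := by
      intro e
      have h5 := w.injective e
      have h6 : a + 1 = a := congrArg Fin.val h5
      omega
    have h3 := lt_of_le_of_ne h1 h2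
    rw [Fin.lt_def] at h3
    exact h3
  have hchain : ∀ (d a : ℕ) (h : a + d < n) (h' : a < n),
      (w ⟨a + d, h⟩ : ℕ) + d ≤ (w ⟨a, h'⟩ : ℕ) := by
    intro d
    induction d with
    | zero =>
      intro a h h'
      exact Nat.le_of_eq rfl
    | succ d IH =>
      intro a h h'
      have hlt : a + d + 1 < n := h
      have h2 := IH a (Nat.lt_of_succ_lt hlt) h'
      have h3 := hdesc (a + d) hlt
      have e1 : (w ⟨a + (d + 1), h⟩ : ℕ) = (w ⟨a + d + 1, hlt⟩ : ℕ) := rfl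
      rw [e1]
      omega
  have hn : 0 < n := by
    rcases Nat.eq_zero_or_pos n with rfl | hpos
    · exact absurd (Equiv.ext fun k => absurd k.isLt (by omega)) hw
    · exact hpos
  apply Equiv.ext
  intro k
  have hk : (k:ℕ) + (n - 1 - (k:ℕ)) < n := by have := k.isLt; omega
  have hlow := hchain (n - 1 - (k:ℕ)) (k:ℕ) hk k.isLt
  have hkk : (⟨(k:ℕ), k.isLt⟩ : Fin n) = k := Fin.ext rfl
  rw [hkk] at hlow
  have h0k : 0 + (k:ℕ) < n := by have := k.isLt; omega
  have hup := hchain (k:ℕ) 0 h0k hn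
  have h0kk : (⟨0 + (k:ℕ), h0k⟩ : Fin n) = k := Fin.ext (Nat.zero_add _)
  rw [h0kk] at hup
  have hw0 : (w ⟨0, hn⟩ : ℕ) < n := (w _).isLt
  have hwk : (w k : ℕ) < n := (w k).isLt
  have hrev : (revPerm n k : ℕ) = n - 1 - (k:ℕ) := by
    show (Fin.rev k : ℕ) = n - 1 - (k:ℕ)
    rw [Fin.val_rev]
    omega
  have hk2 : (k:ℕ) < n := k.isLt
  apply Fin.ext
  rw [hrev]
  clear hchain hdesc hc hw
  omega

/-! ### The family of Grothendieck polynomials -/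

noncomputable def Gfam (w : Equiv.Perm (Fin n)) : MvPolynomial (Fin n) Rb :=
  if h : w = revPerm n then grTop n
  else
    DP (exists_ascent h).choose.1 (exists_ascent h).choose.2
      (Gfam (w * Equiv.swap (exists_ascent h).choose.1 (exists_ascent h).choose.2))
termination_by n * n - invLen w
decreasing_by
  have hp := (exists_ascent h).choose_spec
  have h1 := invLen_lt_of_ascent hp.1 hp.2
  have h2 := invLen_le_sq
    (w * Equiv.swap (exists_ascent h).choose.1 (exists_ascent h).choose.2)
  omega

theorem Gfam_rev : Gfam (revPerm n) = grTop n := by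
  rw [Gfam, dif_pos rfl]

theorem Gfam_spec {w : Equiv.Perm (Fin n)} (h : w ≠ revPerm n) :
    IsDivDiffB (exists_ascent h).choose.1 (exists_ascent h).choose.2
      (Gfam (w * Equiv.swap (exists_ascent h).choose.1 (exists_ascent h).choose.2))
      (Gfam w) := by
  have hG : Gfam w = DP (exists_ascent h).choose.1 (exists_ascent h).choose.2
      (Gfam (w * Equiv.swap (exists_ascent h).choose.1 (exists_ascent h).choose.2)) := by
    rw [Gfam, dif_neg h]
  rw [hG]
  exact DP_spec _ _ _

theorem key : ∀ (m : ℕ) (w : Equiv.Perm (Fin n)) (i j : Fin n),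
    n * n - invLen w ≤ m → (j:ℕ) = (i:ℕ) + 1 → w i < w j →
    IsDivDiffB i j (Gfam (w * Equiv.swap i j)) (Gfam w) := by
  intro m
  induction m with
  | zero =>
    intro w i j hm hj hij
    exfalso
    have h1 := invLen_lt_of_ascent hj hij
    have h2 := invLen_le_sq (w * Equiv.swap i j)
    omega
  | succ m IH =>
    intro w i j hm hj hij
    have hwrev : w ≠ revPerm n := by
      rintro rfl
      exact rev_no_ascent hj hij
    obtain ⟨hp1, hp2⟩ := (exists_ascent hwrev).choose_spec
    set p := (exists_ascent hwrev).choose with hpdef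
    have hcan := Gfam_spec hwrev
    rw [← hpdef] at hcan
    have IH' : ∀ v : Equiv.Perm (Fin n), invLen w < invLen v →
        ∀ a b : Fin n, (b:ℕ) = (a:ℕ) + 1 → v a < v b →
        IsDivDiffB a b (Gfam (v * Equiv.swap a b)) (Gfam v) := by
      intro v hv a b h1 h2
      refine IH v a b ?_ h1 h2
      have := invLen_le_sq v
      omega
    have hwp : invLen w < invLen (w * Equiv.swap p.1 p.2) := invLen_lt_of_ascent hp1 hp2
    have hwi : invLen w < invLen (w * Equiv.swap i j) := invLen_lt_of_ascent hj hij
    by_cases hpi : p.1 = i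
    · have hv1 : (p.1:ℕ) = (i:ℕ) := congrArg Fin.val hpi
      have hpj : p.2 = j := Fin.ext (by omega)
      rw [hpi, hpj] at hcan
      exact hcan
    · have hvpi : (p.1:ℕ) ≠ (i:ℕ) := fun hh => hpi (Fin.ext hh)
      have hij' : i ≠ j := fun hh => absurd (congrArg Fin.val hh) (by omega)
      have hp12 : p.1 ≠ p.2 := fun hh => absurd (congrArg Fin.val hh) (by omega)
      rcases Nat.lt_or_ge (p.1:ℕ) (i:ℕ) with hlt | hge
      · rcases Nat.lt_or_ge ((p.1:ℕ) + 1) (i:ℕ) with hfar | hnear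
        · -- far case, p.1 + 1 < i
          have hip1 : i ≠ p.1 := fun hh => absurd (congrArg Fin.val hh) (by omega)
          have hip2 : i ≠ p.2 := fun hh => absurd (congrArg Fin.val hh) (by omega)
          have hjp1 : j ≠ p.1 := fun hh => absurd (congrArg Fin.val hh) (by omega)
          have hjp2 : j ≠ p.2 := fun hh => absurd (congrArg Fin.val hh) (by omega)
          have hcomm : Equiv.swap p.1 p.2 * Equiv.swap i j
              = Equiv.swap i j * Equiv.swap p.1 p.2 :=
            swap_comm_disjoint hip1.symm hjp1.symm hip2.symm hjp2.symm
          have hzz : w * Equiv.swap i j * Equiv.swap p.1 p.2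
              = w * Equiv.swap p.1 p.2 * Equiv.swap i j := by
            rw [mul_assoc, mul_assoc, hcomm]
          have hA : (w * Equiv.swap p.1 p.2) i < (w * Equiv.swap p.1 p.2) j := by
            rw [Equiv.Perm.mul_apply, Equiv.Perm.mul_apply,
              Equiv.swap_apply_of_ne_of_ne hip1 hip2,
              Equiv.swap_apply_of_ne_of_ne hjp1 hjp2]
            exact hij
          have hB : (w * Equiv.swap i j) p.1 < (w * Equiv.swap i j) p.2 := by
            rw [Equiv.Perm.mul_apply, Equiv.Perm.mul_apply,
              Equiv.swap_apply_of_ne_of_ne hip1.symm hjp1.symm,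
              Equiv.swap_apply_of_ne_of_ne hip2.symm hjp2.symm]
            exact hp2
          have h1 := IH' (w * Equiv.swap p.1 p.2) hwp i j hj hA
          have h3 := IH' (w * Equiv.swap i j) hwi p.1 p.2 hp1 hB
          rw [hzz] at h3
          have hq := DP_spec i j (Gfam (w * Equiv.swap i j))
          have hcon := comm_P hij' hp12 hip1.symm hjp1.symm hip2.symm hjp2.symm
            h1 hcan h3 hq
          rw [← hcon] at hq
          exact hq
        · -- adjacent case A : p.1 + 1 = i, i.e. i = p.2
          have hadj : (i:ℕ) = (p.1:ℕ) + 1 := by omega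
          have hp2i : p.2 = i := Fin.ext (by omega)
          rw [hp2i] at hcan hp2
          have hp1j : p.1 ≠ j := fun hh => absurd (congrArg Fin.val hh) (by omega)
          have hp1i : p.1 ≠ i := hpi
          have hbperm : Equiv.swap i j * Equiv.swap p.1 i * Equiv.swap i j
              = Equiv.swap p.1 i * Equiv.swap i j * Equiv.swap p.1 i :=
            swap_braid_perm hp1i hij' hp1j
          have heq : w * Equiv.swap i j * Equiv.swap p.1 i * Equiv.swap i j
              = w * Equiv.swap p.1 i * Equiv.swap i j * Equiv.swap p.1 i := by
            simp only [mul_assoc]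
            rw [show Equiv.swap i j * (Equiv.swap p.1 i * Equiv.swap i j)
                = Equiv.swap p.1 i * (Equiv.swap i j * Equiv.swap p.1 i) by
              rw [← mul_assoc, ← mul_assoc, hbperm]]
          -- v1 = w * swap p.1 i
          have hv1asc : (w * Equiv.swap p.1 i) i < (w * Equiv.swap p.1 i) j := by
            rw [Equiv.Perm.mul_apply, Equiv.Perm.mul_apply, Equiv.swap_apply_right,
              Equiv.swap_apply_of_ne_of_ne hp1j.symm hij'.symm]
            exact hp2.trans hij
          have hwv1 : invLen w < invLen (w * Equiv.swap p.1 i) := by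
            rw [← hp2i]; exact hwp
          have e2' := IH' (w * Equiv.swap p.1 i) hwv1 i j hj hv1asc
          -- v2 = w * swap p.1 i * swap i j
          have hv2asc : (w * Equiv.swap p.1 i * Equiv.swap i j) p.1
              < (w * Equiv.swap p.1 i * Equiv.swap i j) i := by
            rw [Equiv.Perm.mul_apply, Equiv.Perm.mul_apply, Equiv.Perm.mul_apply,
              Equiv.Perm.mul_apply, Equiv.swap_apply_of_ne_of_ne hp1i hp1j,
              Equiv.swap_apply_left, Equiv.swap_apply_left,
              Equiv.swap_apply_of_ne_of_ne hp1j.symm hij'.symm]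
            exact hij
          have hwv2 : invLen w < invLen (w * Equiv.swap p.1 i * Equiv.swap i j) :=
            hwv1.trans (invLen_lt_of_ascent hj hv1asc)
          have e1' := IH' (w * Equiv.swap p.1 i * Equiv.swap i j) hwv2 p.1 i hadj hv2asc
          -- u1 = w * swap i j
          have hu1asc : (w * Equiv.swap i j) p.1 < (w * Equiv.swap i j) i := by
            rw [Equiv.Perm.mul_apply, Equiv.Perm.mul_apply,
              Equiv.swap_apply_of_ne_of_ne hp1i hp1j, Equiv.swap_apply_left]
            exact hp2.trans hij
          have e5' := IH' (w * Equiv.swap i j) hwi p.1 i hadj hu1asc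
          -- u2 = w * swap i j * swap p.1 i
          have hu2asc : (w * Equiv.swap i j * Equiv.swap p.1 i) i
              < (w * Equiv.swap i j * Equiv.swap p.1 i) j := by
            rw [Equiv.Perm.mul_apply, Equiv.Perm.mul_apply, Equiv.Perm.mul_apply,
              Equiv.Perm.mul_apply, Equiv.swap_apply_right,
              Equiv.swap_apply_of_ne_of_ne hp1i hp1j,
              Equiv.swap_apply_of_ne_of_ne hp1j.symm hij'.symm, Equiv.swap_apply_right]
            exact hp2
          have hwu2 : invLen w < invLen (w * Equiv.swap i j * Equiv.swap p.1 i) :=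
            hwi.trans (invLen_lt_of_ascent hadj hu1asc)
          have e4' := IH' (w * Equiv.swap i j * Equiv.swap p.1 i) hwu2 i j hj hu2asc
          rw [heq] at e4'
          have hq := DP_spec i j (Gfam (w * Equiv.swap i j))
          have hcon := braid_P hp1i hij' hp1j e1' e2' hcan e4' e5' hq
          rw [← hcon] at hq
          exact hq
      · rcases Nat.lt_or_ge ((i:ℕ) + 1) (p.1:ℕ) with hfar | hnear
        · -- far case, i + 1 < p.1
          have hip1 : i ≠ p.1 := fun hh => absurd (congrArg Fin.val hh) (by omega)
          have hip2 : i ≠ p.2 := fun hh => absurd (congrArg Fin.val hh) (by omega)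
          have hjp1 : j ≠ p.1 := fun hh => absurd (congrArg Fin.val hh) (by omega)
          have hjp2 : j ≠ p.2 := fun hh => absurd (congrArg Fin.val hh) (by omega)
          have hcomm : Equiv.swap p.1 p.2 * Equiv.swap i j
              = Equiv.swap i j * Equiv.swap p.1 p.2 :=
            swap_comm_disjoint hip1.symm hjp1.symm hip2.symm hjp2.symm
          have hzz : w * Equiv.swap i j * Equiv.swap p.1 p.2
              = w * Equiv.swap p.1 p.2 * Equiv.swap i j := by
            rw [mul_assoc, mul_assoc, hcomm]
          have hA : (w * Equiv.swap p.1 p.2) i < (w * Equiv.swap p.1 p.2) j := by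
            rw [Equiv.Perm.mul_apply, Equiv.Perm.mul_apply,
              Equiv.swap_apply_of_ne_of_ne hip1 hip2,
              Equiv.swap_apply_of_ne_of_ne hjp1 hjp2]
            exact hij
          have hB : (w * Equiv.swap i j) p.1 < (w * Equiv.swap i j) p.2 := by
            rw [Equiv.Perm.mul_apply, Equiv.Perm.mul_apply,
              Equiv.swap_apply_of_ne_of_ne hip1.symm hjp1.symm,
              Equiv.swap_apply_of_ne_of_ne hip2.symm hjp2.symm]
            exact hp2
          have h1 := IH' (w * Equiv.swap p.1 p.2) hwp i j hj hA
          have h3 := IH' (w * Equiv.swap i j) hwi p.1 p.2 hp1 hB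
          rw [hzz] at h3
          have hq := DP_spec i j (Gfam (w * Equiv.swap i j))
          have hcon := comm_P hij' hp12 hip1.symm hjp1.symm hip2.symm hjp2.symm
            h1 hcan h3 hq
          rw [← hcon] at hq
          exact hq
        · -- adjacent case B : i + 1 = p.1, i.e. p.1 = j
          have hadj : (p.1:ℕ) = (i:ℕ) + 1 := by omega
          have hp1j : p.1 = j := Fin.ext (by omega)
          rw [hp1j] at hcan hp2 hp1 hwp
          have hjp2 : j ≠ p.2 := fun hh => absurd (congrArg Fin.val hh) (by omega)
          have hip2 : i ≠ p.2 := fun hh => absurd (congrArg Fin.val hh) (by omega)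
          have hbperm : Equiv.swap j p.2 * Equiv.swap i j * Equiv.swap j p.2
              = Equiv.swap i j * Equiv.swap j p.2 * Equiv.swap i j :=
            swap_braid_perm hij' hjp2 hip2
          have heq : w * Equiv.swap j p.2 * Equiv.swap i j * Equiv.swap j p.2
              = w * Equiv.swap i j * Equiv.swap j p.2 * Equiv.swap i j := by
            simp only [mul_assoc]
            rw [show Equiv.swap j p.2 * (Equiv.swap i j * Equiv.swap j p.2)
                = Equiv.swap i j * (Equiv.swap j p.2 * Equiv.swap i j) by
              rw [← mul_assoc, ← mul_assoc, hbperm]]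
          -- v1 = w * swap i j
          have hv1asc : (w * Equiv.swap i j) j < (w * Equiv.swap i j) p.2 := by
            rw [Equiv.Perm.mul_apply, Equiv.Perm.mul_apply, Equiv.swap_apply_right,
              Equiv.swap_apply_of_ne_of_ne hip2.symm hjp2.symm]
            exact hij.trans hp2
          have e2' := IH' (w * Equiv.swap i j) hwi j p.2 hp1 hv1asc
          -- v2 = w * swap i j * swap j p.2
          have hv2asc : (w * Equiv.swap i j * Equiv.swap j p.2) i
              < (w * Equiv.swap i j * Equiv.swap j p.2) j := by
            rw [Equiv.Perm.mul_apply, Equiv.Perm.mul_apply, Equiv.Perm.mul_apply,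
              Equiv.Perm.mul_apply, Equiv.swap_apply_of_ne_of_ne hij' hip2,
              Equiv.swap_apply_left, Equiv.swap_apply_left,
              Equiv.swap_apply_of_ne_of_ne hip2.symm hjp2.symm]
            exact hp2
          have hwv2 : invLen w < invLen (w * Equiv.swap i j * Equiv.swap j p.2) :=
            hwi.trans (invLen_lt_of_ascent hp1 hv1asc)
          have e1' := IH' (w * Equiv.swap i j * Equiv.swap j p.2) hwv2 i j hj hv2asc
          -- u1 = w * swap j p.2
          have hu1asc : (w * Equiv.swap j p.2) i < (w * Equiv.swap j p.2) j := by
            rw [Equiv.Perm.mul_apply, Equiv.Perm.mul_apply,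
              Equiv.swap_apply_of_ne_of_ne hij' hip2, Equiv.swap_apply_left]
            exact hij.trans hp2
          have e5' := IH' (w * Equiv.swap j p.2) hwp i j hj hu1asc
          -- u2 = w * swap j p.2 * swap i j
          have hu2asc : (w * Equiv.swap j p.2 * Equiv.swap i j) j
              < (w * Equiv.swap j p.2 * Equiv.swap i j) p.2 := by
            rw [Equiv.Perm.mul_apply, Equiv.Perm.mul_apply, Equiv.Perm.mul_apply,
              Equiv.Perm.mul_apply, Equiv.swap_apply_right,
              Equiv.swap_apply_of_ne_of_ne hij' hip2,
              Equiv.swap_apply_of_ne_of_ne hip2.symm hjp2.symm, Equiv.swap_apply_right]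
            exact hij
          have hwu2 : invLen w < invLen (w * Equiv.swap j p.2 * Equiv.swap i j) :=
            hwp.trans (invLen_lt_of_ascent hj hu1asc)
          have e4' := IH' (w * Equiv.swap j p.2 * Equiv.swap i j) hwu2 j p.2 hp1 hu2asc
          rw [heq] at e4'
          have hq := DP_spec i j (Gfam (w * Equiv.swap i j))
          have hcon := braid_P hij' hjp2 hip2 e1' e2' hq e4' e5' hcan
          rw [hcon] at hq
          exact hq

end Statement18Aux


theorem statement18 (n : ℕ) (hpos : 1 ≤ n) :
    ∃! G : Equiv.Perm (Fin n) → MvPolynomial (Fin n) Rb, IsGrothFam n G := by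
  classical
  refine ⟨Statement18Aux.Gfam, ⟨Statement18Aux.Gfam_rev, ?_⟩, ?_⟩
  · intro w i j hj hdesc
    have hasc : (w * Equiv.swap i j) i < (w * Equiv.swap i j) j := by
      rw [Equiv.Perm.mul_apply, Equiv.Perm.mul_apply, Equiv.swap_apply_left,
        Equiv.swap_apply_right]
      exact hdesc
    have hk := Statement18Aux.key (n * n - invLen (w * Equiv.swap i j))
      (w * Equiv.swap i j) i j le_rfl hj hasc
    rw [show w * Equiv.swap i j * Equiv.swap i j = w from Equiv.mul_swap_mul_self i j w] at hk
    exact hk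
  · intro G' hG'
    have aux : ∀ (m : ℕ) (w : Equiv.Perm (Fin n)), n * n - invLen w ≤ m →
        G' w = Statement18Aux.Gfam w := by
      intro m
      induction m with
      | zero =>
        intro w hm
        rcases eq_or_ne w (revPerm n) with rfl | hne
        · rw [hG'.1, Statement18Aux.Gfam_rev]
        · exfalso
          obtain ⟨hp1, hp2⟩ := (Statement18Aux.exists_ascent hne).choose_spec
          have h1 := Statement18Aux.invLen_lt_of_ascent hp1 hp2
          have h2 := Statement18Aux.invLen_le_sq
            (w * Equiv.swap (Statement18Aux.exists_ascent hne).choose.1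
              (Statement18Aux.exists_ascent hne).choose.2)
          omega
      | succ m IHm =>
        intro w hm
        rcases eq_or_ne w (revPerm n) with rfl | hne
        · rw [hG'.1, Statement18Aux.Gfam_rev]
        · obtain ⟨hp1, hp2⟩ := (Statement18Aux.exists_ascent hne).choose_spec
          set p := (Statement18Aux.exists_ascent hne).choose with hpdef
          have hwp := Statement18Aux.invLen_lt_of_ascent hp1 hp2
          have hvle := Statement18Aux.invLen_le_sq (w * Equiv.swap p.1 p.2)
          have hrec : G' (w * Equiv.swap p.1 p.2)
              = Statement18Aux.Gfam (w * Equiv.swap p.1 p.2) := IHm _ (by omega)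
          have hdesc : (w * Equiv.swap p.1 p.2) p.2 < (w * Equiv.swap p.1 p.2) p.1 := by
            rw [Equiv.Perm.mul_apply, Equiv.Perm.mul_apply, Equiv.swap_apply_left,
              Equiv.swap_apply_right]
            exact hp2
          have hrel := hG'.2 (w * Equiv.swap p.1 p.2) p.1 p.2 hp1 hdesc
          rw [show w * Equiv.swap p.1 p.2 * Equiv.swap p.1 p.2 = w from
            Equiv.mul_swap_mul_self _ _ w, hrec] at hrel
          have hG := Statement18Aux.Gfam_spec hne
          rw [← hpdef] at hG
          have hne12 : p.1 ≠ p.2 := fun hh => absurd (congrArg Fin.val hh) (by omega)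
          exact Statement18Aux.divdiff_unique hne12 hrel hG
    funext w
    exact aux (n * n - invLen w) w le_rfl

end
end

section
/- Let {𝔊_w}_{w ∈ S_n} ⊆ ℤ[β][x_1,…,x_n] and {𝔊_v}_{v ∈ S_{n+1}} ⊆ ℤ[β][x_1,…,x_{n+1}] be the respective unique families of Grothendieck polynomials. Then for every w ∈ S_n: (i) under the natural inclusion ℤ[β][x_1,…,x_n] ⊆ ℤ[β][x_1,…,x_{n+1}], 𝔊_{w×1} = 𝔊_w, where w×1 ∈ S_{n+1} maps i ↦ w(i) for i ≤ n and fixes n+1; and (ii) ∂_i^{(β)} 𝔊_w = −β·𝔊_w for every i ∈ [n−1] with w(i) < w(i+1). -/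
open MvPolynomial

noncomputable section

/-!
For (ii): if `w(i) < w(i+1)` then `𝔊_w = ∂_i^{(β)} 𝔊_{w s_i}` lies in the image of
`∂_i^{(β)}`, which consists of `s_i`-symmetric polynomials, and on a symmetric `g` the operator
`∂_i^{(β)}` is multiplication by `∂_i (1 + β x_{i+1}) = -β`.

For (i): every permutation is reached from `w₀` by steps `v ↦ v s_i` at descents `i`, and
`(v s_i) × 1 = (v × 1) s_i` while renaming variables commutes with `∂_i^{(β)}`; so it suffices to
treat `w₀ × 1`. In `S_{n+1}` this is `w₀ s_1 ⋯ s_n`, and along that chain every step sends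
`M x_k` to `M` with `M` symmetric in `x_k, x_{k+1}`, turning the staircase monomial of `S_{n+1}`
into the one of `S_n`.
-/

namespace IsDivDiffB

variable {N : ℕ} {i j : Fin N} {f g : MvPolynomial (Fin N) Rb}

theorem unique (hij : i ≠ j) {g' : MvPolynomial (Fin N) Rb} (h : IsDivDiffB i j f g)
    (h' : IsDivDiffB i j f g') : g = g' :=
  mul_left_cancel₀ (sub_ne_zero.mpr (X_injective.ne hij)) (h.trans h'.symm)

theorem rename_swap_eq (hij : i ≠ j) (h : IsDivDiffB i j f g) :
    rename (Equiv.swap i j) g = g := by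
  have hinv (p : MvPolynomial (Fin N) Rb) :
      rename (Equiv.swap i j) (rename (Equiv.swap i j) p) = p := by
    rw [rename_rename, ← Equiv.coe_trans, Equiv.swap_swap, Equiv.coe_refl, rename_id,
      AlgHom.id_apply]
  -- applying `s_i` to the defining identity negates both of its sides
  have hs := congrArg (rename (Equiv.swap i j)) h
  rw [map_mul, map_sub, map_sub, rename_X, rename_X, Equiv.swap_apply_left, Equiv.swap_apply_right,
    hinv] at hs
  refine mul_left_cancel₀ (sub_ne_zero.mpr (X_injective.ne hij)) ?_
  unfold IsDivDiffB at h
  linear_combination -hs - h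

theorem rename {M : ℕ} {e : Fin N → Fin M} (he : e.Injective) (h : IsDivDiffB i j f g) :
    IsDivDiffB (e i) (e j) (rename e f) (rename e g) := by
  have hs := congrArg (MvPolynomial.rename e) h
  unfold IsDivDiffB
  simp only [map_mul, map_sub, map_add, map_one, rename_X, rename_C, rename_rename,
    he.swap_apply, ← he.swap_comp] at hs ⊢
  simpa using hs

end IsDivDiffB

theorem isDivDiffB_neg_of_rename_swap_eq {N : ℕ} {i j : Fin N} {g : MvPolynomial (Fin N) Rb}
    (hg : rename (Equiv.swap i j) g = g) : IsDivDiffB i j g (-(C bb) * g) := by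
  unfold IsDivDiffB
  simp only [map_mul, map_add, map_one, rename_C, rename_X, Equiv.swap_apply_right, hg]
  ring

theorem isDivDiffB_mul_X {N : ℕ} {i j : Fin N} {g : MvPolynomial (Fin N) Rb}
    (hg : rename (Equiv.swap i j) g = g) : IsDivDiffB i j (g * X i) g := by
  unfold IsDivDiffB
  simp only [map_mul, map_add, map_one, rename_C, rename_X, Equiv.swap_apply_left,
    Equiv.swap_apply_right, hg]
  ring

section Inversions

variable {n : ℕ}

theorem invLen_le_invLen_revPerm (w : Equiv.Perm (Fin n)) : invLen w ≤ invLen (revPerm n) :=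
  Finset.card_le_card fun p hp => by
    simp only [Finset.mem_filter, Finset.mem_univ, true_and] at hp ⊢
    exact ⟨hp.1, Fin.rev_lt_rev.2 hp.1⟩

theorem swap_lt_swap_of_adjacent {i j a b : Fin n} (hj : (j : ℕ) = i + 1) (hab : a < b)
    (hne : (a, b) ≠ (i, j)) : Equiv.swap i j a < Equiv.swap i j b := by
  simp only [ne_eq, Prod.mk.injEq, Fin.ext_iff] at hne
  rw [Fin.lt_def] at hab ⊢
  simp only [Equiv.swap_apply_def, Fin.ext_iff]
  split_ifs <;> omega

/-- `s_i × s_i` carries the inversions of `w` injectively to inversions of `w s_i` other than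
`(i, i+1)`. -/
theorem invLen_lt_invLen_mul_swap (w : Equiv.Perm (Fin n)) {i j : Fin n}
    (hj : (j : ℕ) = i + 1) (h : w i < w j) : invLen w < invLen (w * Equiv.swap i j) := by
  set s := Equiv.swap i j
  have hmaps : ((Finset.univ.filter fun p : Fin n × Fin n => p.1 < p.2 ∧ w p.2 < w p.1).map
      (s.prodCongr s).toEmbedding) ⊆
      (Finset.univ.filter fun p : Fin n × Fin n =>
        p.1 < p.2 ∧ (w * s) p.2 < (w * s) p.1).erase (i, j) := by
    simp only [Finset.subset_iff, Finset.mem_map, Finset.mem_erase, Finset.mem_filter,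
      Finset.mem_univ, true_and]
    rintro _ ⟨p, ⟨hlt, hinv⟩, rfl⟩
    have hp : p ≠ (i, j) := by rintro rfl; exact hinv.not_gt h
    have hsp : (s p.1, s p.2) ≠ (i, j) := fun he => by
      simp only [Prod.mk.injEq, s, Equiv.swap_apply_eq_iff, Equiv.swap_apply_left,
        Equiv.swap_apply_right] at he
      rw [he.1, he.2, Fin.lt_def] at hlt
      omega
    simpa [s] using ⟨hsp, swap_lt_swap_of_adjacent hj hlt hp, hinv⟩
  calc invLen w = _ := (Finset.card_map _).symm
    _ ≤ _ := Finset.card_le_card hmaps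
    _ < invLen (w * s) := Finset.card_erase_lt_of_mem <| Finset.mem_filter.2
      ⟨Finset.mem_univ _, Fin.lt_def.2 (by simp only; omega), by simpa [s] using h⟩

theorem eq_revPerm_of_forall_descent {w : Equiv.Perm (Fin n)}
    (h : ∀ i j : Fin n, (j : ℕ) = i + 1 → w j < w i) : w = revPerm n := by
  have hw : StrictAnti w := by
    cases n with
    | zero => exact fun a => a.elim0
    | succ n => exact Fin.strictAnti_iff_succ_lt.2 fun i => h _ _ (by simp)
  have hrev : StrictAnti (revPerm n) := fun a b hab => Fin.rev_lt_rev.2 hab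
  exact Equiv.coe_inj.1 ((hw.range_inj hrev).1 (by simp only [Equiv.range_eq_univ]))

theorem revPerm_induction {P : Equiv.Perm (Fin n) → Prop} (hrev : P (revPerm n))
    (hstep : ∀ (v : Equiv.Perm (Fin n)) (i j : Fin n), (j : ℕ) = i + 1 → v j < v i → P v →
      P (v * Equiv.swap i j)) (w : Equiv.Perm (Fin n)) : P w := by
  induction hk : invLen (revPerm n) - invLen w using Nat.strong_induction_on generalizing w with
  | _ k ih =>
  by_cases hasc : ∃ i j : Fin n, (j : ℕ) = i + 1 ∧ w i < w j
  · obtain ⟨i, j, hj, hlt⟩ := hasc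
    have hlen := invLen_lt_invLen_mul_swap w hj hlt
    have := invLen_le_invLen_revPerm (w * Equiv.swap i j)
    simpa [mul_assoc] using hstep (w * Equiv.swap i j) i j hj (by simpa using hlt)
      (ih _ (by omega) _ rfl)
  · push Not at hasc
    rw [eq_revPerm_of_forall_descent fun i j hj =>
      (hasc i j hj).lt_of_ne (w.injective.ne (Fin.ne_of_val_ne (by omega))).symm]
    exact hrev

end Inversions

theorem rename_prod_X_pow_of_forall_eq {R ι : Type*} [CommSemiring R] [Fintype ι]
    (σ : Equiv.Perm ι) {e : ι → ℕ} (he : ∀ a, e (σ a) = e a) :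
    rename σ (∏ a, X a ^ e a : MvPolynomial ι R) = ∏ a, X a ^ e a := by
  simp only [map_prod, map_pow, rename_X]
  exact Fintype.prod_equiv σ _ _ fun a => by rw [he]

section ExtPerm

variable {m n : ℕ}

theorem extPerm_mul (z z' : Equiv.Perm (Fin m)) (w w' : Equiv.Perm (Fin n)) :
    extPerm (z * z') (w * w') = extPerm z w * extPerm z' w' := by
  ext x
  simp [extPerm, ← Equiv.Perm.sumCongr_mul]

theorem extPerm_swap_one (i j : Fin m) :
    extPerm (Equiv.swap i j) (1 : Equiv.Perm (Fin n)) =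
      Equiv.swap (Fin.castAdd n i) (Fin.castAdd n j) := by
  simp [extPerm, ← Equiv.trans_assoc, Equiv.symm_trans_swap_trans]

theorem extPerm_one_apply_castAdd (z : Equiv.Perm (Fin m)) (a : Fin m) :
    extPerm z (1 : Equiv.Perm (Fin n)) (Fin.castAdd n a) = Fin.castAdd n (z a) := by
  simp [extPerm]

theorem extPerm_one_apply_natAdd (z : Equiv.Perm (Fin m)) (a : Fin n) :
    extPerm z (1 : Equiv.Perm (Fin n)) (Fin.natAdd m a) = Fin.natAdd m a := by
  simp [extPerm]

end ExtPerm

section Chain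

variable (n : ℕ)

/-- `chainPerm n k = w₀ s₁ ⋯ s_k` in `S_{n+1}`; it interpolates between `w₀` at `k = 0` and
`w₀ × 1` at `k = n`. -/
def chainPerm : ℕ → Equiv.Perm (Fin (n + 1))
  | 0 => revPerm (n + 1)
  | k + 1 => chainPerm k * swapAt (n + 1) k

/-- The Grothendieck polynomial of `chainPerm n k`: the staircase monomial `x^δ` of `S_{n+1}`
with `x₁ ⋯ x_k` divided out. -/
def chainMono (k : ℕ) : MvPolynomial (Fin (n + 1)) Rb :=
  ∏ a : Fin (n + 1), X a ^ (if (a : ℕ) < k then n - 1 - a else n - a)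

variable {n}

theorem chainPerm_apply {k : ℕ} (hk : k ≤ n) (a : Fin (n + 1)) :
    (chainPerm n k a : ℕ) =
      if (a : ℕ) < k then n - 1 - a else if (a : ℕ) = k then n else n - a := by
  induction k generalizing a with
  | zero =>
    simp only [chainPerm, revPerm, Equiv.coe_fn_mk, Fin.val_rev]
    split_ifs <;> omega
  | succ k ih =>
    simp only [chainPerm, swapAt, dif_pos (show k + 1 < n + 1 by omega), Equiv.Perm.mul_apply]
    rw [ih (by omega), Equiv.swap_apply_def]
    split_ifs <;> simp_all [Fin.ext_iff] <;> omega

theorem chainPerm_self : chainPerm n n = extPerm (revPerm n) (1 : Equiv.Perm (Fin 1)) := by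
  ext a
  rw [chainPerm_apply le_rfl]
  induction a using Fin.addCases with
  | left a => simp [extPerm_one_apply_castAdd, revPerm, Fin.val_rev]; omega
  | right a => rw [extPerm_one_apply_natAdd]; simp [Fin.fin_one_eq_zero a]

theorem chainPerm_succ {k : ℕ} (hk : k < n) :
    chainPerm n (k + 1) = chainPerm n k * Equiv.swap ⟨k, by omega⟩ ⟨k + 1, by omega⟩ := by
  rw [chainPerm, swapAt, dif_pos (by omega)]

theorem chainPerm_descent {k : ℕ} (hk : k < n) :
    chainPerm n k ⟨k + 1, by omega⟩ < chainPerm n k ⟨k, by omega⟩ := by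
  rw [Fin.lt_def, chainPerm_apply hk.le, chainPerm_apply hk.le]
  simp only [lt_self_iff_false, if_true, if_false]
  split_ifs <;> omega

theorem chainMono_zero : chainMono n 0 = grTop (n + 1) :=
  Finset.prod_congr rfl fun a _ => by simp

theorem chainMono_self : chainMono n n = rename (Fin.castLE (Nat.le_succ n)) (grTop n) := by
  simp only [chainMono, grTop, map_prod, map_pow, rename_X, Fin.prod_univ_castSucc, Fin.val_last,
    lt_self_iff_false, if_false, Nat.sub_self, pow_zero, mul_one, Fin.val_castSucc]
  exact Finset.prod_congr rfl fun a _ => by rw [if_pos a.isLt]; rfl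

theorem chainMono_eq_mul_X {k : ℕ} (hk : k < n) :
    chainMono n k = chainMono n (k + 1) * X ⟨k, by omega⟩ := by
  set i : Fin (n + 1) := ⟨k, by omega⟩
  have hrest : ∀ a ∈ Finset.univ.erase i, (X a : MvPolynomial (Fin (n + 1)) Rb) ^
      (if (a : ℕ) < k then n - 1 - a else n - a) =
      X a ^ (if (a : ℕ) < k + 1 then n - 1 - a else n - a) := fun a ha => by
    have : (a : ℕ) ≠ k := fun h => Finset.ne_of_mem_erase ha (Fin.ext h)
    congr 1
    split_ifs <;> omega
  rw [chainMono, chainMono, ← Finset.mul_prod_erase _ _ (Finset.mem_univ i),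
    ← Finset.mul_prod_erase _ _ (Finset.mem_univ i), Finset.prod_congr rfl hrest]
  simp only [i, lt_self_iff_false, lt_add_one, if_true, if_false]
  rw [show n - k = n - 1 - k + 1 by omega, pow_succ]
  ring

theorem rename_swap_chainMono_succ {k : ℕ} (hk : k < n) :
    rename (Equiv.swap ⟨k, by omega⟩ ⟨k + 1, by omega⟩) (chainMono n (k + 1)) =
      chainMono n (k + 1) :=
  rename_prod_X_pow_of_forall_eq _ fun a => by
    rw [Equiv.swap_apply_def]
    split_ifs <;> simp_all [Fin.ext_iff] <;> omega

theorem apply_chainPerm {G : Equiv.Perm (Fin (n + 1)) → MvPolynomial (Fin (n + 1)) Rb}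
    (hG : IsGrothFam (n + 1) G) {k : ℕ} (hk : k ≤ n) : G (chainPerm n k) = chainMono n k := by
  induction k with
  | zero => rw [chainMono_zero]; exact hG.1
  | succ k ih =>
    have hd := hG.2 _ _ _ rfl (chainPerm_descent hk)
    rw [ih (by omega), chainMono_eq_mul_X hk, ← chainPerm_succ hk] at hd
    exact hd.unique (by simp [Fin.ext_iff]) (isDivDiffB_mul_X (rename_swap_chainMono_succ hk))

end Chain

namespace IsGrothFam

variable {n : ℕ} {G : Equiv.Perm (Fin n) → MvPolynomial (Fin n) Rb}

theorem apply_extPerm_one (hG : IsGrothFam n G)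
    {G' : Equiv.Perm (Fin (n + 1)) → MvPolynomial (Fin (n + 1)) Rb} (hG' : IsGrothFam (n + 1) G')
    (w : Equiv.Perm (Fin n)) :
    G' (extPerm w (1 : Equiv.Perm (Fin 1))) = rename (Fin.castLE (Nat.le_succ n)) (G w) := by
  induction w using revPerm_induction with
  | hrev => rw [← chainPerm_self, apply_chainPerm hG' le_rfl, chainMono_self, hG.1]
  | hstep v i j hj hdesc ih =>
    have hext : extPerm (v * Equiv.swap i j) (1 : Equiv.Perm (Fin 1)) =
        extPerm v 1 * Equiv.swap (Fin.castAdd 1 i) (Fin.castAdd 1 j) := by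
      rw [← extPerm_swap_one, ← extPerm_mul, one_mul]
    have hdesc' : extPerm v (1 : Equiv.Perm (Fin 1)) (Fin.castAdd 1 j) <
        extPerm v 1 (Fin.castAdd 1 i) := by
      rw [extPerm_one_apply_castAdd, extPerm_one_apply_castAdd]; exact hdesc
    have hd' := hG'.2 _ _ _ (by simpa using hj) hdesc'
    rw [← hext, ih] at hd'
    exact hd'.unique (by simp [Fin.ext_iff, hj])
      ((hG.2 v i j hj hdesc).rename (Fin.castAdd_injective n 1))

theorem isDivDiffB_of_ascent (hG : IsGrothFam n G) (w : Equiv.Perm (Fin n)) {i j : Fin n}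
    (hj : (j : ℕ) = i + 1) (hasc : w i < w j) : IsDivDiffB i j (G w) (-(C bb) * G w) := by
  have hd := hG.2 (w * Equiv.swap i j) i j hj (by simpa using hasc)
  rw [mul_assoc, Equiv.swap_mul_self, mul_one] at hd
  exact isDivDiffB_neg_of_rename_swap_eq (hd.rename_swap_eq (Fin.ne_of_val_ne (by omega)))

end IsGrothFam

theorem statement19 (n : ℕ)
    (G : Equiv.Perm (Fin n) → MvPolynomial (Fin n) Rb) (hG : IsGrothFam n G)
    (G' : Equiv.Perm (Fin (n + 1)) → MvPolynomial (Fin (n + 1)) Rb)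
    (hG' : IsGrothFam (n + 1) G') (w : Equiv.Perm (Fin n)) :
    G' (extPerm w (1 : Equiv.Perm (Fin 1))) =
        rename (Fin.castLE (Nat.le_succ n)) (G w) ∧
      ∀ i j : Fin n, (j : ℕ) = (i : ℕ) + 1 → w i < w j →
        IsDivDiffB i j (G w) (-(C bb) * G w) :=
  ⟨hG.apply_extPerm_one hG' w, fun _ _ hj hasc => hG.isDivDiffB_of_ascent w hj hasc⟩
end
end
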